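/- arXiv:1701.06383 — 7 statements merged into one kernel-verified Lean document; each statement's English description precedes it below -/
import Mathlib

section
/- Let A be a unital ring, B a ring, and φ : M₂(A) → B an arbitrary function. Then φ is a ring homomorphism if and only if φ is a semigroup homomorphism (i.e. φ(xy) = φ(x)φ(y) for all x, y ∈ M₂(A)) satisfying φ(1) = φ(e₁₁) + φ(e₂₂). -/
/-!
Conjugating by `1 = Σ eᵢᵢ` gives the Peirce decomposition `φ x = Σᵢⱼ φ (eᵢⱼ xᵢⱼ)`, so additivity
reduces to additivity of `a ↦ φ (eᵢⱼ a)`. For `i ≠ j` this follows from the factorisation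
`eᵢⱼ (a + b) = (eᵢᵢ + eᵢⱼ a) (eᵢⱼ b + eⱼⱼ)`, whose factors have disjoint supports, and the other
entries are reached by multiplying with matrix units. For `2 × 2` matrices the hypothesis on `φ 1`
also forces `φ 0 = 0`, via `φ 0 = φ 0 φ 1 = φ 0 φ e₁₁ + φ 0 φ e₂₂ = φ 0 + φ 0`.
-/

open Matrix

namespace Matrix

section MulHom

variable {n A B : Type*} [Fintype n] [DecidableEq n] [Ring A] [NonUnitalRing B]
  (φ : Matrix n n A →ₙ* B)

theorem map_eq_sum_map_single (hφ1 : φ 1 = ∑ i, φ (single i i 1)) (x : Matrix n n A) :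
    φ x = ∑ i, ∑ j, φ (single i j (x i j)) := by
  calc φ x = φ 1 * φ x * φ 1 := by rw [← map_mul, ← map_mul, one_mul, mul_one]
    _ = ∑ i, ∑ j, φ (single i i 1 * x * single j j 1) := by
      simp only [hφ1, Finset.sum_mul, Finset.mul_sum, map_mul]
      exact Finset.sum_comm
    _ = ∑ i, ∑ j, φ (single i j (x i j)) := by simp only [single_mul_mul_single, one_mul, mul_one]

theorem map_add_of_map_single_add (hφ1 : φ 1 = ∑ i, φ (single i i 1)) {x y : Matrix n n A}
    (h : ∀ i j, φ (single i j (x i j + y i j)) = φ (single i j (x i j)) + φ (single i j (y i j))) :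
    φ (x + y) = φ x + φ y := by
  simp only [map_eq_sum_map_single φ hφ1 (x + y), map_eq_sum_map_single φ hφ1 x,
    map_eq_sum_map_single φ hφ1 y, add_apply, h, Finset.sum_add_distrib]

variable (hφ0 : φ 0 = 0) (hφ1 : φ 1 = ∑ i, φ (single i i 1))
include hφ0 hφ1

theorem map_single_add_single {i j k l : n} (h : (i, j) ≠ (k, l)) (a b : A) :
    φ (single i j a + single k l b) = φ (single i j a) + φ (single k l b) := by
  refine map_add_of_map_single_add φ hφ1 fun p q => ?_
  simp only [single_apply]
  split_ifs <;> simp_all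

theorem map_single_add_of_ne {i j : n} (hij : i ≠ j) (a b : A) :
    φ (single i j (a + b)) = φ (single i j a) + φ (single i j b) := by
  have hfactor : single i j (a + b) = (single i i 1 + single i j a) * (single i j b + single j j 1) := by
    simp [add_mul, mul_add, hij, hij.symm, single_add, add_comm]
  calc φ (single i j (a + b))
      = (φ (single i i 1) + φ (single i j a)) * (φ (single i j b) + φ (single j j 1)) := by
        rw [hfactor, map_mul, map_single_add_single φ hφ0 hφ1 (by simp [hij]),
          map_single_add_single φ hφ0 hφ1 (by simp [hij])]
    _ = φ (single i j a) + φ (single i j b) := by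
        simp only [add_mul, mul_add, ← map_mul, single_mul_single_same, one_mul, mul_one]
        rw [single_mul_single_of_ne (h := hij), single_mul_single_of_ne (h := hij.symm), hφ0]
        abel

theorem map_single_add [Nontrivial n] (p q : n) (a b : A) :
    φ (single p q (a + b)) = φ (single p q a) + φ (single p q b) := by
  obtain ⟨i, j, hij⟩ := exists_pair_ne n
  have hconj (c : A) : single p q c = single p i 1 * single i j c * single j q 1 := by simp
  rw [hconj, hconj a, hconj b, map_mul, map_mul, map_single_add_of_ne φ hφ0 hφ1 hij]
  simp only [map_mul, mul_add, add_mul]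

theorem map_add_of_map_one_eq_sum [Nontrivial n] (x y : Matrix n n A) :
    φ (x + y) = φ x + φ y :=
  map_add_of_map_single_add φ hφ1 fun i j => map_single_add φ hφ0 hφ1 i j _ _

end MulHom

theorem map_zero_of_map_one_eq_add {A B : Type*} [Ring A] [NonUnitalRing B]
    (φ : Matrix (Fin 2) (Fin 2) A →ₙ* B) (hφ1 : φ 1 = φ (single 0 0 1) + φ (single 1 1 1)) :
    φ 0 = 0 := by
  have : φ 0 = φ 0 + φ 0 := by
    calc φ 0 = φ 0 * φ 1 := by rw [← map_mul, zero_mul]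
      _ = φ 0 + φ 0 := by rw [hφ1, mul_add, ← map_mul, ← map_mul, zero_mul, zero_mul]
  simpa using this

end Matrix

/-- Let `A` be a unital ring, `B` a ring, and
`φ : M₂(A) → B` an arbitrary function.  Then `φ` is a ring homomorphism
(additive and multiplicative) if and only if `φ` is a semigroup
homomorphism satisfying `φ(1) = φ(e₁₁) + φ(e₂₂)`. -/
theorem stmt_0 {A B : Type*} [Ring A] [Ring B]
    (φ : Matrix (Fin 2) (Fin 2) A → B) :
    ((∀ x y, φ (x + y) = φ x + φ y) ∧ (∀ x y, φ (x * y) = φ x * φ y)) ↔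
      ((∀ x y, φ (x * y) = φ x * φ y) ∧
        φ 1 = φ (Matrix.single 0 0 (1 : A)) +
              φ (Matrix.single 1 1 (1 : A))) := by
  constructor
  · rintro ⟨hadd, hmul⟩
    refine ⟨hmul, ?_⟩
    rw [← sum_single_one, Fin.sum_univ_two, hadd]
  · rintro ⟨hmul, hφ1⟩
    let ψ : Matrix (Fin 2) (Fin 2) A →ₙ* B := ⟨φ, hmul⟩
    have hψ1 : ψ 1 = ∑ i, ψ (single i i 1) := by rw [Fin.sum_univ_two]; exact hφ1
    exact ⟨map_add_of_map_one_eq_sum ψ (map_zero_of_map_one_eq_add ψ hφ1) hψ1, hmul⟩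
end

section
/- Let A and B be C*-algebras with A unital, and φ : M₂(A) → B an arbitrary function. Then φ is a *-homomorphism if and only if φ is a *-semigroup homomorphism (i.e. φ(xy) = φ(x)φ(y) and φ(x*) = φ(x)* for all x, y ∈ M₂(A)) satisfying φ(i·1) = i·φ(e₁₁) + i·φ(e₂₂). -/
/-!
A multiplicative map `φ` on `M₂(A)` with `φ 1 = φ e₁₁ + φ e₂₂` is additive: `φ x = φ 1 · φ x · φ 1`
splits into the four corners `φ (eᵢᵢ x eⱼⱼ) = φ (eᵢⱼ xᵢⱼ)`, and a corner is additive because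
`(eᵢᵢ a + eᵢⱼ b)(eᵢⱼ + eⱼⱼ) = eᵢⱼ (a + b)` while `φ (eᵢᵢ a + eᵢⱼ b)` splits by multiplying with
`φ 1 = φ eᵢᵢ + φ eⱼⱼ`. The condition on `φ (i·1)` gives `φ 0 = φ 0 · φ (i·1) = 2i · φ 0`, so
`φ 0 = 0`, the `φ eᵢᵢ` are orthogonal idempotents, and `φ 1 = φ (-1)² = φ e₁₁ + φ e₂₂`.

For ℂ-homogeneity it suffices that `φ (t·1) = t · φ 1` for real `t`. The map `t ↦ φ (t·1)` is
additive and, since `φ (t·1) = φ (√t·1)⋆ φ (√t·1)`, positive for `t ≥ 0`; so `0 ≤ φ (t·1) ≤ φ 1`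
on `[0, 1]`, which bounds it near `0` and makes it continuous, hence ℝ-linear.
-/

open Matrix

section AdditivityOfMultiplicative

variable {R B : Type*} [Semiring R] [NonUnitalNonAssocSemiring B]

theorem Matrix.one_fin_two_eq_single_add_single :
    (1 : Matrix (Fin 2) (Fin 2) R) = single 0 0 1 + single 1 1 1 := by
  ext i j
  fin_cases i <;> fin_cases j <;> simp

variable {φ : Matrix (Fin 2) (Fin 2) R → B}

theorem map_single_add_of_ne (hmul : ∀ x y, φ (x * y) = φ x * φ y) {i j : Fin 2} (hij : i ≠ j)
    (hunit : φ 1 = φ (single i i 1) + φ (single j j 1)) (a b : R) :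
    φ (single i j (a + b)) = φ (single i j a) + φ (single i j b) := by
  set u := single i i a + single i j b
  set v := single i j (1 : R) + single j j 1
  have hu : φ u = φ (single i i a) + φ (single i j b) := by
    calc φ u = φ (u * 1) := by rw [mul_one]
      _ = φ (u * single i i 1) + φ (u * single j j 1) := by rw [hmul, hunit, mul_add, hmul, hmul]
      _ = φ (single i i a) + φ (single i j b) := by
        simp [u, add_mul, single_mul_single_of_ne _ _ _ _ hij,
          single_mul_single_of_ne _ _ _ _ hij.symm]
  calc φ (single i j (a + b)) = φ (u * v) := by
        simp [u, v, single_add, mul_add, add_mul, single_mul_single_of_ne _ _ _ _ hij,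
          single_mul_single_of_ne _ _ _ _ hij.symm]
    _ = φ (single i i a * v) + φ (single i j b * v) := by rw [hmul, hu, add_mul, hmul, hmul]
    _ = φ (single i j a) + φ (single i j b) := by
        simp [v, mul_add, single_mul_single_of_ne _ _ _ _ hij,
          single_mul_single_of_ne _ _ _ _ hij.symm]

theorem map_single_add (hmul : ∀ x y, φ (x * y) = φ x * φ y)
    (hone : φ 1 = φ (single 0 0 1) + φ (single 1 1 1)) (i j : Fin 2) (a b : R) :
    φ (single i j (a + b)) = φ (single i j a) + φ (single i j b) := by
  have hone' : φ 1 = φ (single 1 1 1) + φ (single 0 0 1) := hone.trans (add_comm _ _)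
  have hoff : ∀ {i j : Fin 2}, i ≠ j → ∀ c d : R,
      φ (single i j (c + d)) = φ (single i j c) + φ (single i j d) := by
    intro i j hij
    fin_cases i <;> fin_cases j <;> first
      | exact absurd rfl hij
      | exact map_single_add_of_ne hmul hij hone
      | exact map_single_add_of_ne hmul hij hone'
  -- `eᵢᵢ c = eᵢₖ c * eₖᵢ` reduces the diagonal case to the off-diagonal one
  obtain ⟨k, hik⟩ : ∃ k, i ≠ k := ⟨i + 1, by fin_cases i <;> decide⟩
  have hdiag : ∀ c : R, φ (single i i c) = φ (single i k c) * φ (single k i 1) := by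
    intro c
    rw [← hmul, single_mul_single_same, mul_one]
  rcases eq_or_ne i j with rfl | hij
  · rw [hdiag, hdiag, hdiag, hoff hik, add_mul]
  · exact hoff hij a b

theorem map_eq_sum_map_single (hmul : ∀ x y, φ (x * y) = φ x * φ y)
    (hone : φ 1 = φ (single 0 0 1) + φ (single 1 1 1)) (x : Matrix (Fin 2) (Fin 2) R) :
    φ x = ∑ i, ∑ j, φ (single i j (x i j)) := by
  have hone' : φ 1 = ∑ i, φ (single i i 1) := by rw [hone, Fin.sum_univ_two]
  calc φ x = φ (1 * x * 1) := by rw [one_mul, mul_one]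
    _ = ∑ i, ∑ j, φ (single i i 1 * x * single j j 1) := by
      rw [hmul, hmul, hone', Finset.sum_mul, Finset.sum_mul]
      simp only [Finset.mul_sum, hmul]
    _ = ∑ i, ∑ j, φ (single i j (x i j)) := by simp only [single_mul_mul_single, one_mul, mul_one]

theorem map_add_of_map_mul (hmul : ∀ x y, φ (x * y) = φ x * φ y)
    (hone : φ 1 = φ (single 0 0 1) + φ (single 1 1 1)) (x y : Matrix (Fin 2) (Fin 2) R) :
    φ (x + y) = φ x + φ y := by
  simp only [map_eq_sum_map_single hmul hone (x + y), Matrix.add_apply, map_single_add hmul hone,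
    Finset.sum_add_distrib, ← map_eq_sum_map_single hmul hone]

end AdditivityOfMultiplicative

section ComplexAlgebra

variable {A B : Type*} [Ring A] [Algebra ℂ A] [NonUnitalRing B] [Module ℂ B] [SMulCommClass ℂ B B]
  {φ : Matrix (Fin 2) (Fin 2) A → B}

theorem map_zero_of_map_I_smul_one (hmul : ∀ x y, φ (x * y) = φ x * φ y)
    (hI : φ (Complex.I • 1) = Complex.I • φ (single 0 0 1) + Complex.I • φ (single 1 1 1)) :
    φ 0 = 0 := by
  have hzero_mul : ∀ x, φ 0 * φ x = φ 0 := fun x => by rw [← hmul, zero_mul]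
  have h : (2 * Complex.I - 1) • φ 0 = 0 := by
    have := hzero_mul (Complex.I • 1)
    rw [hI, mul_add, mul_smul_comm, mul_smul_comm, hzero_mul, hzero_mul, ← add_smul] at this
    rw [sub_smul, one_smul, two_mul, this, sub_self]
  refine (smul_eq_zero.mp h).resolve_left ?_
  intro h'
  simpa using congrArg Complex.re h'

theorem map_one_of_map_I_smul_one [IsScalarTower ℂ B B] (hmul : ∀ x y, φ (x * y) = φ x * φ y)
    (hI : φ (Complex.I • 1) = Complex.I • φ (single 0 0 1) + Complex.I • φ (single 1 1 1)) :
    φ 1 = φ (single 0 0 1) + φ (single 1 1 1) := by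
  set p := φ (single 0 0 1) + φ (single 1 1 1)
  have hmul_single : ∀ i j : Fin 2, φ (single i i 1) * φ (single j j 1) =
      if i = j then φ (single i i 1) else 0 := by
    intro i j
    split_ifs with hij
    · rw [← hmul, hij, single_mul_single_same, mul_one]
    · rw [← hmul, single_mul_single_of_ne _ _ _ _ hij, map_zero_of_map_I_smul_one hmul hI]
  have hp : p * p = p := by
    simp only [p, mul_add, add_mul, hmul_single]
    simp
  have hneg_one : φ (-1) = -p := by
    rw [← hp, show (-1 : Matrix (Fin 2) (Fin 2) A) = Complex.I • 1 * Complex.I • 1 by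
      rw [smul_mul_smul_comm, Complex.I_mul_I, one_mul, neg_one_smul], hmul, hI, ← smul_add,
      smul_mul_smul_comm, Complex.I_mul_I, neg_one_smul]
  calc φ 1 = φ (-1 * -1) := by rw [neg_mul_neg, mul_one]
    _ = p := by rw [hmul, hneg_one, neg_mul_neg, hp]

end ComplexAlgebra

theorem AddMonoidHom.map_real_eq_smul_map_one_of_nonneg {B : Type*} [NonUnitalCStarAlgebra B]
    [PartialOrder B] [StarOrderedRing B] (f : ℝ →+ B) (hf : ∀ t, 0 ≤ t → 0 ≤ f t) (t : ℝ) :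
    f t = t • f 1 := by
  have hbound : ∀ t ∈ Set.Icc (0 : ℝ) 1, ‖f t‖ ≤ ‖f 1‖ := by
    rintro t ⟨ht₀, ht₁⟩
    refine CStarAlgebra.norm_le_norm_of_nonneg_of_le (hf t ht₀) ?_
    have h := hf (1 - t) (by linarith)
    rwa [map_sub, sub_nonneg] at h
  have hcont : Continuous f := by
    refine f.continuous_of_isBounded_nhds_zero (s := Set.Icc (-1) 1)
      (Icc_mem_nhds (by norm_num) (by norm_num)) ?_
    refine (Metric.isBounded_closedBall (x := 0) (r := ‖f 1‖)).subset ?_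
    rintro _ ⟨t, ⟨ht₀, ht₁⟩, rfl⟩
    rw [mem_closedBall_zero_iff]
    rcases le_total 0 t with ht | ht
    · exact hbound t ⟨ht, ht₁⟩
    · simpa using hbound (-t) ⟨by linarith, by linarith⟩
  simpa using map_real_smul f hcont t 1

theorem map_smul_of_map_I_smul_one {A B : Type*} [Ring A] [StarRing A] [Algebra ℂ A]
    [StarModule ℂ A] [NonUnitalCStarAlgebra B] {φ : Matrix (Fin 2) (Fin 2) A → B}
    (hmul : ∀ x y, φ (x * y) = φ x * φ y) (hstar : ∀ x, φ (star x) = star (φ x))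
    (hadd : ∀ x y, φ (x + y) = φ x + φ y) (hI : φ (Complex.I • 1) = Complex.I • φ 1)
    (c : ℂ) (x : Matrix (Fin 2) (Fin 2) A) :
    φ (c • x) = c • φ x := by
  let _ := CStarAlgebra.spectralOrder B
  have := CStarAlgebra.spectralOrderedRing B
  let ρ : ℝ →+ B := AddMonoidHom.mk' (fun t => φ ((t : ℂ) • 1)) fun s t => by
    rw [Complex.ofReal_add, add_smul, hadd]
  have hρ_nonneg : ∀ t, 0 ≤ t → 0 ≤ ρ t := by
    intro t ht
    have hsq : ((t : ℂ) • 1 : Matrix (Fin 2) (Fin 2) A) =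
        star ((Real.sqrt t : ℂ) • 1) * ((Real.sqrt t : ℂ) • 1) := by
      rw [star_smul, star_one, Complex.star_def, Complex.conj_ofReal, smul_mul_smul_comm, mul_one,
        ← Complex.ofReal_mul, Real.mul_self_sqrt ht]
    change 0 ≤ φ _
    rw [hsq, hmul, hstar]
    exact star_mul_self_nonneg _
  have hreal : ∀ t : ℝ, φ ((t : ℂ) • 1) = (t : ℂ) • φ 1 := by
    intro t
    simpa [ρ, Complex.coe_smul] using ρ.map_real_eq_smul_map_one_of_nonneg hρ_nonneg t
  have hone_mul : ∀ x, φ 1 * φ x = φ x := fun x => by rw [← hmul, one_mul]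
  have hscalar : φ (c • 1) = c • φ 1 := by
    have hc : (c • 1 : Matrix (Fin 2) (Fin 2) A) =
        (c.re : ℂ) • 1 + (c.im : ℂ) • 1 * Complex.I • 1 := by
      rw [smul_mul_smul_comm, one_mul, ← add_smul, Complex.re_add_im]
    rw [hc, hadd, hmul, hreal, hreal, hI, smul_mul_smul_comm, hone_mul, ← add_smul,
      Complex.re_add_im]
  calc φ (c • x) = φ (c • 1 * x) := by rw [smul_mul_assoc, one_mul]
    _ = c • φ x := by rw [hmul, hscalar, smul_mul_assoc, hone_mul]

/-- Let `A` and `B` be C*-algebras with `A` unital, and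
`φ : M₂(A) → B` an arbitrary function.  Then `φ` is a `*`-homomorphism
(ℂ-linear, multiplicative and involution-preserving) if and only if `φ` is a
`*`-semigroup homomorphism satisfying `φ(i·1) = i·φ(e₁₁) + i·φ(e₂₂)`. -/
theorem stmt_4 {A B : Type*} [CStarAlgebra A] [NonUnitalCStarAlgebra B]
    (φ : Matrix (Fin 2) (Fin 2) A → B) :
    ((∀ x y, φ (x + y) = φ x + φ y) ∧ (∀ (c : ℂ) (x), φ (c • x) = c • φ x) ∧
        (∀ x y, φ (x * y) = φ x * φ y) ∧ (∀ x, φ (star x) = star (φ x))) ↔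
      ((∀ x y, φ (x * y) = φ x * φ y) ∧ (∀ x, φ (star x) = star (φ x)) ∧
        φ (Complex.I • (1 : Matrix (Fin 2) (Fin 2) A)) =
          Complex.I • φ (Matrix.single 0 0 (1 : A)) +
          Complex.I • φ (Matrix.single 1 1 (1 : A))) := by
  constructor
  · rintro ⟨hadd, hsmul, hmul, hstar⟩
    refine ⟨hmul, hstar, ?_⟩
    rw [hsmul, one_fin_two_eq_single_add_single, hadd, smul_add]
  · rintro ⟨hmul, hstar, hI⟩
    have hone := map_one_of_map_I_smul_one hmul hI
    have hadd := map_add_of_map_mul hmul hone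
    have hI' : φ (Complex.I • 1) = Complex.I • φ 1 := by rw [hI, hone, smul_add]
    exact ⟨hadd, map_smul_of_map_I_smul_one hmul hstar hadd hI', hmul, hstar⟩
end

section
/- Let A and B be C*-algebras with A unital. A function φ : A → B is a *-homomorphism if and only if the entrywise map φ ⊗ id_{M₂} : M₂(A) → M₂(B) is a *-semigroup homomorphism (multiplicative and involution-preserving) and φ(i·1) = i·φ(1). -/
private lemma stmt5_aux_pos {A B : Type*} [CStarAlgebra A] [NonUnitalCStarAlgebra B]
    (φ : A → B)
    (hmul : ∀ x y, φ (x * y) = φ x * φ y)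
    (hstar : ∀ x, φ (star x) = star (φ x)) :
    ∀ t : ℝ, 0 ≤ t → (0 : Unitization ℂ B) ≤ (φ ((t:ℂ) • 1) : B) := by
  have hsa : ∀ t : ℝ, IsSelfAdjoint (φ ((t:ℂ) • 1)) := by
    intro t
    have h : star ((t:ℂ) • (1:A)) = (t:ℂ) • 1 := by
      simp [star_smul, Complex.star_def, Complex.conj_ofReal]
    rw [IsSelfAdjoint, ← hstar, h]
  intro t ht
  have key : ((t:ℂ) • (1:A))
      = (((Real.sqrt t : ℝ):ℂ) • 1) * (((Real.sqrt t : ℝ):ℂ) • 1) := by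
    rw [smul_mul_smul_comm, one_mul, ← Complex.ofReal_mul, Real.mul_self_sqrt ht]
  rw [key, hmul]
  set c := φ (((Real.sqrt t : ℝ):ℂ) • (1:A)) with hc
  have hcsa : star c = c := hsa _
  calc (0 : Unitization ℂ B) ≤ star (c : Unitization ℂ B) * c :=
        star_mul_self_nonneg _
    _ = ((c * c : B) : Unitization ℂ B) := by
        rw [← Unitization.inr_star, hcsa, ← Unitization.inr_mul]

private lemma stmt5_aux_real {A B : Type*} [CStarAlgebra A] [NonUnitalCStarAlgebra B]
    (φ : A → B) (e : B) (f : A →+ B) (hfφ : ∀ x, f x = φ x)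
    (hq : ∀ q : ℚ, φ ((q:ℂ) • 1) = (q:ℂ) • e)
    (hpos : ∀ t : ℝ, 0 ≤ t → (0 : Unitization ℂ B) ≤ (φ ((t:ℂ) • 1) : B)) :
    ∀ t : ℝ, φ ((t:ℂ) • 1) = (t:ℂ) • e := by
  have hqr : ∀ q : ℚ, φ ((((q:ℝ)):ℂ) • 1) = (((q:ℝ)):ℂ) • e := by
    intro q
    have h : (((q:ℝ)):ℂ) = (q:ℂ) := by push_cast; ring
    rw [h, hq]
  intro t
  rw [← sub_eq_zero, ← norm_le_zero_iff]
  refine le_of_forall_pos_le_add (fun ε hε => ?_)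
  rw [zero_add]
  set δ : ℝ := ε / (3 * (‖e‖ + 1)) with hδ
  have hepos : (0:ℝ) < ‖e‖ + 1 := by positivity
  have hδpos : 0 < δ := by positivity
  obtain ⟨q1, hq1a, hq1b⟩ := exists_rat_btwn (show t - δ < t by linarith)
  obtain ⟨q2, hq2a, hq2b⟩ := exists_rat_btwn (show t < t + δ by linarith)
  have hdiff : ∀ s u : ℝ,
      φ ((u:ℂ) • 1) - φ ((s:ℂ) • 1) = φ (((u - s : ℝ):ℂ) • 1) := by
    intro s u
    rw [← hfφ, ← hfφ, ← hfφ, ← map_sub]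
    congr 1
    rw [← sub_smul, ← Complex.ofReal_sub]
  have h1 : (0 : Unitization ℂ B)
      ≤ ((φ ((t:ℂ) • 1) - φ (((q1:ℝ):ℂ) • 1) : B) : Unitization ℂ B) := by
    rw [hdiff]; exact hpos _ (by linarith)
  have h2 : ((φ ((t:ℂ) • 1) - φ (((q1:ℝ):ℂ) • 1) : B) : Unitization ℂ B)
      ≤ ((φ (((q2:ℝ):ℂ) • 1) - φ (((q1:ℝ):ℂ) • 1) : B) : Unitization ℂ B) := by
    rw [← sub_nonneg, ← Unitization.inr_sub, sub_sub_sub_cancel_right, hdiff]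
    exact hpos _ (by linarith)
  have h3 : ‖φ ((t:ℂ) • 1) - φ (((q1:ℝ):ℂ) • 1)‖ ≤ ((q2:ℝ) - q1) * ‖e‖ := by
    have hh := CStarAlgebra.norm_le_norm_of_nonneg_of_le h1 h2
    rw [Unitization.norm_inr, Unitization.norm_inr] at hh
    refine hh.trans ?_
    have hc : ((q2:ℝ) - (q1:ℝ) : ℝ) = ((q2 - q1 : ℚ) : ℝ) := by push_cast; ring
    rw [hdiff, hc, hqr, norm_smul, Complex.norm_real, Real.norm_eq_abs,
      abs_of_nonneg (by push_cast; linarith), ← hc]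
  have hq1e : φ (((q1:ℝ):ℂ) • 1) = ((q1:ℝ):ℂ) • e := hqr q1
  calc ‖φ ((t:ℂ) • 1) - (t:ℂ) • e‖
      = ‖(φ ((t:ℂ) • 1) - φ (((q1:ℝ):ℂ) • 1))
          + (φ (((q1:ℝ):ℂ) • 1) - (t:ℂ) • e)‖ := by
        rw [sub_add_sub_cancel]
    _ ≤ ‖φ ((t:ℂ) • 1) - φ (((q1:ℝ):ℂ) • 1)‖
          + ‖φ (((q1:ℝ):ℂ) • 1) - (t:ℂ) • e‖ := norm_add_le _ _
    _ ≤ ((q2:ℝ) - q1) * ‖e‖ + |(q1:ℝ) - t| * ‖e‖ := by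
        refine add_le_add h3 ?_
        rw [hq1e, ← sub_smul, ← Complex.ofReal_sub, norm_smul,
          Complex.norm_real, Real.norm_eq_abs]
    _ ≤ ε := by
        have habs : |(q1:ℝ) - t| ≤ δ := by
          rw [abs_sub_comm, abs_of_nonneg (by linarith)]; linarith
        have h4 : ((q2:ℝ) - q1) ≤ 2*δ := by linarith
        have heq : 3*δ*(‖e‖+1) = ε := by
          rw [hδ]; field_simp
        nlinarith [norm_nonneg e, abs_nonneg ((q1:ℝ) - t),
          mul_le_mul_of_nonneg_right h4 (norm_nonneg e),
          mul_le_mul_of_nonneg_right habs (norm_nonneg e), hδpos]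

/-- Let `A` and `B` be C*-algebras with `A` unital.  A
function `φ : A → B` is a `*`-homomorphism (ℂ-linear, multiplicative and
involution-preserving) if and only if the entrywise map
`φ ⊗ id_{M₂} : M₂(A) → M₂(B)` is a `*`-semigroup homomorphism and
`φ(i·1) = i·φ(1)`. -/
theorem stmt_5 {A B : Type*} [CStarAlgebra A] [NonUnitalCStarAlgebra B]
    (φ : A → B) :
    ((∀ x y, φ (x + y) = φ x + φ y) ∧ (∀ (c : ℂ) (x), φ (c • x) = c • φ x) ∧
        (∀ x y, φ (x * y) = φ x * φ y) ∧ (∀ x, φ (star x) = star (φ x))) ↔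
      ((∀ x y : Matrix (Fin 2) (Fin 2) A, (x * y).map φ = x.map φ * y.map φ) ∧
        (∀ x : Matrix (Fin 2) (Fin 2) A, (star x).map φ = star (x.map φ)) ∧
        φ (Complex.I • (1 : A)) = Complex.I • φ 1) := by
  constructor
  · rintro ⟨hadd, hsmul, hmul, hstar⟩
    refine ⟨?_, ?_, hsmul Complex.I 1⟩
    · intro x y
      ext i j
      simp [Matrix.mul_apply, Fin.sum_univ_two, Matrix.map_apply, hadd, hmul]
    · intro x
      ext i j
      simp [Matrix.map_apply, Matrix.star_apply, hstar]
  · rintro ⟨hm, hst, hi⟩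
    set e := φ 1 with he
    set a := φ 0 with ha
    -- Step 1: φ 0 = 0, using the condition φ (i•1) = i•φ 1.
    have haux : ∀ x : A, a = φ x * a + a * a := by
      intro x
      have := congrFun (congrFun (hm !![x,0;0,0] !![(1:A),0;0,0]) 0) 1
      simpa [Matrix.mul_apply, Fin.sum_univ_two] using this
    have h11 : a = a * a + a * a := by
      have := congrFun (congrFun (hm !![(1:A),0;0,0] !![(1:A),0;0,0]) 1) 1
      simpa [Matrix.mul_apply, Fin.sum_univ_two] using this
    have h01 : a = e * a + a * a := haux 1
    have hiaux : a = (Complex.I • e) * a + a * a := by rw [← hi]; exact haux _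
    have hp : a * a = Complex.I • (a * a) := by
      have h1 : e * a = a * a := add_right_cancel (h01.symm.trans h11)
      rw [smul_mul_assoc, h1] at hiaux
      exact (add_right_cancel (hiaux.symm.trans h11)).symm
    have h0 : φ 0 = 0 := by
      have hp0 : a * a = 0 := by
        have h2 : (1 - Complex.I) • (a * a) = 0 := by
          rw [sub_smul, one_smul, ← hp, sub_self]
        rcases smul_eq_zero.mp h2 with h | h
        · exact absurd h (by simp [sub_eq_zero, Complex.ext_iff])
        · exact h
      show a = 0
      rw [h11, hp0, add_zero]
    -- Step 2: multiplicativity, additivity, star-preservation.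
    have hmul : ∀ x y, φ (x * y) = φ x * φ y := by
      intro x y
      have := congrFun (congrFun (hm !![x,0;0,0] !![y,0;0,0]) 0) 0
      simpa [Matrix.mul_apply, Fin.sum_univ_two, h0] using this
    have hadd : ∀ x y, φ (x + y) = φ x + φ y := by
      intro x y
      have := congrFun (congrFun (hm !![x,1;0,0] !![(1:A),0;y,0]) 0) 0
      simpa [Matrix.mul_apply, Fin.sum_univ_two, h0, hmul x 1, hmul 1 y,
        ← hmul x 1, ← hmul 1 y, mul_one, one_mul] using this
    have hstar : ∀ x, φ (star x) = star (φ x) := by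
      intro x
      have := congrFun (congrFun (hst !![x,0;0,0]) 0) 0
      simpa [Matrix.star_apply] using this
    -- Step 3: rational homogeneity from additivity.
    set f : A →+ B := AddMonoidHom.mk' φ hadd with hf
    have hfφ : ∀ x, f x = φ x := fun _ => rfl
    have hq : ∀ q : ℚ, φ ((q:ℂ) • 1) = (q:ℂ) • e := by
      intro q
      have := map_ratCast_smul f ℂ ℂ q (1:A)
      simpa [hfφ] using this
    have hpos := stmt5_aux_pos φ hmul hstar
    have hreal : ∀ t : ℝ, φ ((t:ℂ) • 1) = (t:ℂ) • e :=
      stmt5_aux_real φ e f hfφ hq hpos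
    -- Step 6: complex homogeneity.
    have hee : e * e = e := by rw [he, ← hmul, one_mul]
    have hC : ∀ c : ℂ, φ (c • 1) = c • e := by
      intro c
      have hsplit : c • (1:A) = ((c.re:ℝ):ℂ) • 1 + (((c.im:ℝ):ℂ) * Complex.I) • 1 := by
        rw [← add_smul]
        congr 1
        simpa using c.re_add_im
      have h2 : ((((c.im:ℝ)):ℂ) * Complex.I) • (1:A)
          = (((c.im:ℝ):ℂ) • 1) * (Complex.I • 1) := by
        rw [smul_mul_smul_comm, one_mul]
      rw [hsplit, hadd, h2, hmul, hreal, hi, hreal]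
      rw [smul_mul_smul_comm, hee, ← add_smul]
      congr 1
      simpa using c.re_add_im
    refine ⟨hadd, ?_, hmul, hstar⟩
    intro c x
    have hone : c • x = (c • (1:A)) * x := by rw [smul_mul_assoc, one_mul]
    rw [hone, hmul, hC, smul_mul_assoc, he, ← hmul, one_mul]
end

section
/- Let A and B be C*-algebras with A unital, and let φ : cl(GL(M₂(A))) → B be an arbitrary function defined on the norm closure of the set of invertible elements of M₂(A). Then φ extends to a *-homomorphism M₂(A) → B if and only if φ is a *-semigroup homomorphism (φ(xy) = φ(x)φ(y) and φ(x*) = φ(x)* whenever x, y and xy lie in cl(GL(M₂(A)))) satisfying φ(i·1) = i·φ(e₁₁) + i·φ(e₂₂). -/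
/-!
Multiplicativity on the closure `𝕊` of the invertibles already pins `φ` down on much of
`M₂(A)`: `𝕊` is a multiplicative semigroup containing every nilpotent `N = lim (N + t)`, hence
every matrix unit `a • eᵢⱼ` and every unipotent `1 + a • eᵢⱼ` (`i ≠ j`). The condition on
`φ (i • 1)` forces `φ 0 = 0` and `φ 1 = φ e₁₁ + φ e₂₂`, so the corner maps
`Φᵢⱼ a = φ (a • eᵢⱼ)` multiply like matrix units and `φ s = ∑ Φᵢⱼ (sᵢⱼ)` on `𝕊` (Peirce
decomposition). The `Φᵢⱼ` are additive because `a ↦ 1 + a • eᵢⱼ` is multiplicative, real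
homogeneous because a self-adjoint ring homomorphism `ℝ → B` is positive, hence bounded, hence
continuous, and complex homogeneous by the condition on `φ (i • 1)` once more. Then
`x ↦ ∑ Φᵢⱼ (xᵢⱼ)` is the required `*`-homomorphism.
-/

section ClosureUnits

variable {R : Type*} [Ring R] [TopologicalSpace R]

theorem smul_one_mem_closure_isUnit {𝕜 : Type*} [Field 𝕜] [Algebra 𝕜 R] {c : 𝕜} (hc : c ≠ 0) :
    c • (1 : R) ∈ closure {z : R | IsUnit z} :=
  subset_closure <| show IsUnit _ by
    simpa [Algebra.algebraMap_eq_smul_one] using (isUnit_iff_ne_zero.mpr hc).map (algebraMap 𝕜 R)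

variable [IsTopologicalRing R]

theorem mul_mem_closure_isUnit {x y : R} (hx : x ∈ closure {z : R | IsUnit z})
    (hy : y ∈ closure {z : R | IsUnit z}) : x * y ∈ closure {z : R | IsUnit z} :=
  (IsUnit.submonoid R).topologicalClosure.mul_mem hx hy

open Filter Topology in
theorem IsNilpotent.mem_closure_isUnit (𝕜 : Type*) [NontriviallyNormedField 𝕜] [Algebra 𝕜 R]
    [ContinuousSMul 𝕜 R] {N : R} (hN : IsNilpotent N) :
    N ∈ closure {z : R | IsUnit z} := by
  have hlim : Tendsto (fun t : 𝕜 => N + algebraMap 𝕜 R t) (𝓝[≠] 0) (𝓝 N) := by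
    simpa using ((continuous_algebraMap 𝕜 R).tendsto 0).mono_left nhdsWithin_le_nhds |>.const_add N
  refine mem_closure_of_tendsto hlim (eventually_nhdsWithin_of_forall fun t ht => ?_)
  exact hN.isUnit_add_right_of_commute ((isUnit_iff_ne_zero.mpr ht).map _)
    (Algebra.commutes t N).symm

end ClosureUnits

namespace Matrix

variable {n : Type*} [Fintype n]

theorem isNilpotent_single_of_ne [DecidableEq n] {α : Type*} [Semiring α] {i j : n} (h : i ≠ j)
    (a : α) : IsNilpotent (single i j a) :=
  ⟨2, by simp [pow_two, h.symm]⟩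

theorem single_mem_closure_isUnit (𝕜 : Type*) [NontriviallyNormedField 𝕜] {α : Type*} [Ring α]
    [TopologicalSpace α] [IsTopologicalRing α] [Algebra 𝕜 α] [ContinuousSMul 𝕜 α]
    [DecidableEq n] [Nontrivial n] (i j : n) (a : α) :
    single i j a ∈ closure {z : Matrix n n α | IsUnit z} := by
  by_cases hij : i = j
  · subst hij
    obtain ⟨k, hk⟩ := exists_ne i
    have := mul_mem_closure_isUnit ((isNilpotent_single_of_ne hk.symm a).mem_closure_isUnit 𝕜)
      ((isNilpotent_single_of_ne hk (1 : α)).mem_closure_isUnit 𝕜)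
    rwa [single_mul_single_same, mul_one] at this
  · exact (isNilpotent_single_of_ne hij a).mem_closure_isUnit 𝕜

section cornerSum

variable {R A B : Type*} [CommSemiring R] [NonUnitalNonAssocSemiring A] [Module R A]
  [NonUnitalNonAssocSemiring B] [Module R B]

def cornerSum (Φ : n → n → A →ₗ[R] B) : Matrix n n A →ₗ[R] B :=
  ∑ i, ∑ j, (Φ i j).comp (entryLinearMap R A i j)

variable (Φ : n → n → A →ₗ[R] B)

theorem cornerSum_apply (x : Matrix n n A) : cornerSum Φ x = ∑ i, ∑ j, Φ i j (x i j) := by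
  simp [cornerSum]

theorem cornerSum_mul [DecidableEq n]
    (hΦ : ∀ i j k l a b, Φ i j a * Φ k l b = if j = k then Φ i l (a * b) else 0)
    (x y : Matrix n n A) : cornerSum Φ (x * y) = cornerSum Φ x * cornerSum Φ y := by
  simp only [cornerSum_apply, mul_apply, map_sum, Finset.sum_mul]
  simp only [Finset.mul_sum, hΦ]
  refine Finset.sum_congr rfl fun i _ => ?_
  rw [Finset.sum_comm]
  refine Finset.sum_congr rfl fun j _ => ?_
  rw [Finset.sum_comm]
  simp [Finset.sum_ite_eq]

theorem cornerSum_star [StarAddMonoid A] [StarAddMonoid B]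
    (hΦ : ∀ i j a, star (Φ i j a) = Φ j i (star a)) (x : Matrix n n A) :
    cornerSum Φ (star x) = star (cornerSum Φ x) := by
  simp only [cornerSum_apply, star_apply, star_sum, hΦ]
  exact Finset.sum_comm

end cornerSum

end Matrix

section ScalarHom

variable {B : Type*} [NonUnitalCStarAlgebra B]

theorem NonUnitalRingHom.map_real_eq_smul (f : ℝ →ₙ+* B) (hf : ∀ r, IsSelfAdjoint (f r))
    (r : ℝ) : f r = r • f 1 := by
  let _ := CStarAlgebra.spectralOrder B
  have := CStarAlgebra.spectralOrderedRing B
  have nonneg {t : ℝ} (ht : 0 ≤ t) : 0 ≤ f t := by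
    simpa [← map_mul, Real.mul_self_sqrt ht, (hf _).star_eq] using star_mul_self_nonneg (f √t)
  have norm_le {t : ℝ} (ht : |t| ≤ 1) : ‖f t‖ ≤ ‖f 1‖ := by
    wlog ht0 : 0 ≤ t generalizing t
    · simpa using this (t := -t) (by rwa [abs_neg]) (by linarith)
    refine CStarAlgebra.norm_le_norm_of_nonneg_of_le (nonneg ht0) (sub_nonneg.mp ?_)
    rw [← map_sub]
    exact nonneg (by linarith [le_abs_self t])
  -- a rational `q` with `|x| < q < 2|x|` brings `x / q` into `[-1, 1]`
  have bound (x : ℝ) : ‖f x‖ ≤ 2 * ‖f 1‖ * ‖x‖ := by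
    rcases eq_or_ne x 0 with rfl | hx
    · simp
    obtain ⟨q, hxq, hq⟩ := exists_rat_btwn (lt_two_mul_self (abs_pos.mpr hx))
    have hq0 : (0 : ℝ) < q := (abs_pos.mpr hx).trans hxq
    have hfx : f x = (q : ℂ) • f (x / q) := by
      have := map_ratCast_smul (f : ℝ →+ B) ℝ ℂ q (x / q)
      rwa [smul_eq_mul, mul_div_cancel₀ x hq0.ne'] at this
    calc ‖f x‖ = q * ‖f (x / q)‖ := by
          rw [hfx, norm_smul, Complex.norm_ratCast, abs_of_pos hq0]
      _ ≤ (2 * |x|) * ‖f 1‖ := by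
          gcongr
          apply norm_le
          rw [abs_div, abs_of_pos hq0, div_le_one hq0]
          exact hxq.le
      _ = 2 * ‖f 1‖ * ‖x‖ := by rw [Real.norm_eq_abs]; ring
  simpa using map_real_smul f (AddMonoidHomClass.continuous_of_bound f _ bound) r 1

theorem NonUnitalRingHom.map_complex_eq_smul (g : ℂ →ₙ+* B)
    (hg : ∀ c, g (star c) = star (g c)) (hI : g Complex.I = Complex.I • g 1) (c : ℂ) :
    g c = c • g 1 := by
  let f : ℝ →ₙ+* B := g.comp (Complex.ofRealHom : ℝ →ₙ+* ℂ)
  have hf (r : ℝ) : g r = (r : ℂ) • g 1 := by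
    rw [show g r = f r from rfl, f.map_real_eq_smul (fun r => ?_) r, Complex.coe_smul]
    · rfl
    · change star (g r) = g r
      rw [← hg, Complex.star_def, Complex.conj_ofReal]
  calc g c = g c.re + g c.im * g Complex.I := by
        rw [← map_mul, ← map_add, Complex.re_add_im]
    _ = c • g 1 := by
        rw [hf, hf, hI, smul_mul_smul_comm, ← map_mul, mul_one, ← add_smul, Complex.re_add_im]

end ScalarHom

namespace ClosureUnitsHom

variable {A B : Type*} [CStarAlgebra A] [NonUnitalCStarAlgebra B]
  {φ : Matrix (Fin 2) (Fin 2) A → B}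

open Matrix Complex

local notation "𝕊" => closure (Set.ofPred fun z : Matrix (Fin 2) (Fin 2) A => IsUnit z)
local notation "e" => Matrix.single (m := Fin 2) (n := Fin 2) (α := A)

theorem map_zero (hmul : ∀ x ∈ 𝕊, ∀ y ∈ 𝕊, φ (x * y) = φ x * φ y)
    (hI : φ (I • 1) = I • φ (e 0 0 1) + I • φ (e 1 1 1)) : φ 0 = 0 := by
  have absorb {s} (hs : s ∈ 𝕊) : φ 0 * φ s = φ 0 := by
    rw [← hmul 0 (IsNilpotent.zero.mem_closure_isUnit ℂ) s hs, zero_mul]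
  have h : φ 0 = (2 * I) • φ 0 :=
    calc φ 0 = φ 0 * φ (I • 1) := (absorb (smul_one_mem_closure_isUnit I_ne_zero)).symm
      _ = (2 * I) • φ 0 := by
        rw [hI, mul_add, mul_smul_comm, mul_smul_comm, absorb (single_mem_closure_isUnit ℂ _ _ _),
          absorb (single_mem_closure_isUnit ℂ _ _ _), two_mul, add_smul]
  have h' : (1 - 2 * I) • φ 0 = 0 := by rw [sub_smul, one_smul, ← h, sub_self]
  refine (smul_eq_zero.mp h').resolve_left fun h0 => ?_
  simpa using congrArg Complex.im h0

theorem map_single_mul_map_single (hmul : ∀ x ∈ 𝕊, ∀ y ∈ 𝕊, φ (x * y) = φ x * φ y)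
    (hI : φ (I • 1) = I • φ (e 0 0 1) + I • φ (e 1 1 1)) (i j k l : Fin 2) (a b : A) :
    φ (e i j a) * φ (e k l b) = if j = k then φ (e i l (a * b)) else 0 := by
  rw [← hmul _ (single_mem_closure_isUnit ℂ _ _ _) _ (single_mem_closure_isUnit ℂ _ _ _)]
  split_ifs with h
  · rw [h, single_mul_single_same]
  · rw [single_mul_single_of_ne _ _ _ _ h, map_zero hmul hI]

theorem map_one (hmul : ∀ x ∈ 𝕊, ∀ y ∈ 𝕊, φ (x * y) = φ x * φ y)
    (hI : φ (I • 1) = I • φ (e 0 0 1) + I • φ (e 1 1 1)) :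
    φ 1 = φ (e 0 0 1) + φ (e 1 1 1) := by
  set Q := φ (e 0 0 1) + φ (e 1 1 1)
  have hQ : Q * Q = Q := by
    simp [Q, add_mul, mul_add, map_single_mul_map_single hmul hI]
  set u : Matrix (Fin 2) (Fin 2) A := I • 1
  have hu : u ∈ 𝕊 := smul_one_mem_closure_isUnit I_ne_zero
  -- `u ^ 4 = 1` while `φ u = I • Q`
  have hu4 : u * u * (u * u) = 1 := by simp [u, smul_smul]
  calc φ 1 = φ (u * u) * φ (u * u) := by
        rw [← hmul _ (mul_mem_closure_isUnit hu hu) _ (mul_mem_closure_isUnit hu hu), hu4]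
    _ = Q := by
        rw [hmul u hu u hu, hI, ← smul_add, smul_mul_smul_comm, hQ, I_mul_I, neg_one_smul,
          neg_mul_neg, hQ]

theorem map_I_smul_one (hmul : ∀ x ∈ 𝕊, ∀ y ∈ 𝕊, φ (x * y) = φ x * φ y)
    (hI : φ (I • 1) = I • φ (e 0 0 1) + I • φ (e 1 1 1)) : φ (I • 1) = I • φ 1 := by
  rw [hI, map_one hmul hI, smul_add]

theorem map_eq_sum_corners (hmul : ∀ x ∈ 𝕊, ∀ y ∈ 𝕊, φ (x * y) = φ x * φ y)
    (hI : φ (I • 1) = I • φ (e 0 0 1) + I • φ (e 1 1 1)) {s : Matrix (Fin 2) (Fin 2) A}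
    (hs : s ∈ 𝕊) : φ s = ∑ i, ∑ j, φ (e i j (s i j)) := by
  have corner (i j : Fin 2) : φ (e i j (s i j)) = φ (e i i 1) * φ s * φ (e j j 1) := by
    have his := mul_mem_closure_isUnit (single_mem_closure_isUnit ℂ i i (1 : A)) hs
    rw [← hmul _ (single_mem_closure_isUnit ℂ _ _ _) _ hs,
      ← hmul _ his _ (single_mem_closure_isUnit ℂ _ _ _), single_mul_mul_single, one_mul, mul_one]
  have one_mem : (1 : Matrix (Fin 2) (Fin 2) A) ∈ 𝕊 := subset_closure isUnit_one
  calc φ s = φ 1 * φ s * φ 1 := by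
        rw [← hmul 1 one_mem s hs, ← hmul _ (mul_mem_closure_isUnit one_mem hs) 1 one_mem,
          one_mul, mul_one]
    _ = ∑ i, ∑ j, φ (e i j (s i j)) := by
        simp only [corner, Fin.sum_univ_two, map_one hmul hI, add_mul, mul_add]
        abel

theorem map_one_add_single (hmul : ∀ x ∈ 𝕊, ∀ y ∈ 𝕊, φ (x * y) = φ x * φ y)
    (hI : φ (I • 1) = I • φ (e 0 0 1) + I • φ (e 1 1 1)) {i j : Fin 2} (hij : i ≠ j) (a : A) :
    φ (1 + e i j a) = φ 1 + φ (e i j a) := by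
  rw [map_eq_sum_corners hmul hI
      (subset_closure (isNilpotent_single_of_ne hij a).isUnit_one_add),
    map_one hmul hI]
  fin_cases i <;> fin_cases j <;> simp [Fin.sum_univ_two, map_zero hmul hI] at hij ⊢ <;> abel

theorem map_single_add (hmul : ∀ x ∈ 𝕊, ∀ y ∈ 𝕊, φ (x * y) = φ x * φ y)
    (hI : φ (I • 1) = I • φ (e 0 0 1) + I • φ (e 1 1 1)) (i j : Fin 2) (a b : A) :
    φ (e i j (a + b)) = φ (e i j a) + φ (e i j b) := by
  have off_diag {i j : Fin 2} (hij : i ≠ j) (a b : A) :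
      φ (e i j (a + b)) = φ (e i j a) + φ (e i j b) := by
    have unit_mem (c : A) : 1 + e i j c ∈ 𝕊 :=
      subset_closure (isNilpotent_single_of_ne hij c).isUnit_one_add
    have one_mul_map {s} (hs : s ∈ 𝕊) : φ 1 * φ s = φ s := by
      rw [← hmul 1 (subset_closure isUnit_one) s hs, one_mul]
    have map_mul_one {s} (hs : s ∈ 𝕊) : φ s * φ 1 = φ s := by
      rw [← hmul s hs 1 (subset_closure isUnit_one), mul_one]
    have key : (1 + e i j a) * (1 + e i j b) = 1 + e i j (a + b) := by
      simp [add_mul, mul_add, single_add, hij.symm]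
      abel
    have h := hmul _ (unit_mem a) _ (unit_mem b)
    rw [key, map_one_add_single hmul hI hij, map_one_add_single hmul hI hij,
      map_one_add_single hmul hI hij] at h
    rw [mul_add, add_mul, add_mul, map_mul_one (subset_closure isUnit_one),
      one_mul_map (single_mem_closure_isUnit ℂ _ _ _),
      map_mul_one (single_mem_closure_isUnit ℂ _ _ _), map_single_mul_map_single hmul hI,
      if_neg hij.symm, add_zero] at h
    rw [add_assoc] at h
    exact add_left_cancel h
  by_cases hij : i = j
  · subst hij
    obtain ⟨k, hk⟩ := exists_ne i
    have diag (c : A) : φ (e i i c) = φ (e i k c) * φ (e k i 1) := by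
      rw [map_single_mul_map_single hmul hI, if_pos rfl, mul_one]
    rw [diag, diag, diag, off_diag hk.symm, add_mul]
  · exact off_diag hij a b

theorem star_map_single (hstar : ∀ x, x ∈ 𝕊 → star x ∈ 𝕊 → φ (star x) = star (φ x))
    (i j : Fin 2) (a : A) : star (φ (e i j a)) = φ (e j i (star a)) := by
  have star_single : star (e i j a) = e j i (star a) := by
    rw [star_eq_conjTranspose, conjTranspose_single]
  rw [← hstar _ (single_mem_closure_isUnit ℂ _ _ _)
    (star_single ▸ single_mem_closure_isUnit ℂ _ _ _), star_single]

theorem map_single_smul (hmul : ∀ x ∈ 𝕊, ∀ y ∈ 𝕊, φ (x * y) = φ x * φ y)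
    (hstar : ∀ x, x ∈ 𝕊 → star x ∈ 𝕊 → φ (star x) = star (φ x))
    (hI : φ (I • 1) = I • φ (e 0 0 1) + I • φ (e 1 1 1)) (i j : Fin 2) (c : ℂ) (a : A) :
    φ (e i j (c • a)) = c • φ (e i j a) := by
  let g : ℂ →ₙ+* B :=
    { toFun := fun c => φ (e i i (c • 1))
      map_mul' := fun c d => by
        simp only [map_single_mul_map_single hmul hI, if_pos, smul_mul_smul_comm, one_mul]
      map_zero' := by simp [map_zero hmul hI]
      map_add' := fun c d => by simp only [add_smul, map_single_add hmul hI] }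
  have hg_star (c : ℂ) : g (star c) = star (g c) := by
    change φ (e i i (star c • 1)) = star (φ (e i i (c • 1)))
    rw [star_map_single hstar, star_smul, star_one]
  have hg_I : g I = I • g 1 := by
    change φ (e i i (I • 1)) = I • φ (e i i ((1 : ℂ) • 1))
    have one_mem : (1 : Matrix (Fin 2) (Fin 2) A) ∈ 𝕊 := subset_closure isUnit_one
    calc φ (e i i (I • 1)) = φ (I • 1) * φ (e i i 1) := by
          rw [← hmul _ (smul_one_mem_closure_isUnit I_ne_zero) _
              (single_mem_closure_isUnit ℂ _ _ _), smul_mul_assoc, one_mul, smul_single]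
      _ = I • φ (e i i ((1 : ℂ) • 1)) := by
          rw [map_I_smul_one hmul hI, smul_mul_assoc,
            ← hmul 1 one_mem _ (single_mem_closure_isUnit ℂ _ _ _), one_mul, one_smul]
  calc φ (e i j (c • a)) = g c * φ (e i j a) := by
        change _ = φ (e i i (c • 1)) * _
        rw [map_single_mul_map_single hmul hI, if_pos rfl, smul_one_mul]
    _ = c • φ (e i j a) := by
        rw [g.map_complex_eq_smul hg_star hg_I c, smul_mul_assoc]
        change c • (φ (e i i ((1 : ℂ) • 1)) * _) = _
        rw [one_smul, map_single_mul_map_single hmul hI, if_pos rfl, one_mul]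

theorem exists_starAlgHom_eqOn (hmul : ∀ x ∈ 𝕊, ∀ y ∈ 𝕊, φ (x * y) = φ x * φ y)
    (hstar : ∀ x, x ∈ 𝕊 → star x ∈ 𝕊 → φ (star x) = star (φ x))
    (hI : φ (I • 1) = I • φ (e 0 0 1) + I • φ (e 1 1 1)) :
    ∃ ψ : Matrix (Fin 2) (Fin 2) A →⋆ₙₐ[ℂ] B, Set.EqOn ψ φ 𝕊 := by
  let Φ (i j : Fin 2) : A →ₗ[ℂ] B :=
    { toFun := fun a => φ (e i j a)
      map_add' := map_single_add hmul hI i j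
      map_smul' := map_single_smul hmul hstar hI i j }
  refine ⟨{ cornerSum Φ with
      map_zero' := (cornerSum Φ).map_zero
      map_mul' := cornerSum_mul Φ (map_single_mul_map_single hmul hI)
      map_star' := cornerSum_star Φ (star_map_single hstar) }, fun x hx => ?_⟩
  change cornerSum Φ x = φ x
  rw [cornerSum_apply, map_eq_sum_corners hmul hI hx]
  rfl

end ClosureUnitsHom

/-- Let `A` and `B` be C*-algebras with `A` unital, and let
`φ` be an arbitrary function on the norm closure of the invertibles of
`M₂(A)` (modelled as a total function whose relevant values are those on the
closure).  Then `φ` extends to a `*`-homomorphism `M₂(A) → B` if and only if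
`φ` is a `*`-semigroup homomorphism on the closure satisfying
`φ(i·1) = i·φ(e₁₁) + i·φ(e₂₂)`. -/
theorem stmt_6 {A B : Type*} [CStarAlgebra A] [NonUnitalCStarAlgebra B]
    (φ : Matrix (Fin 2) (Fin 2) A → B) :
    (∃ ψ : Matrix (Fin 2) (Fin 2) A → B,
        (∀ x y, ψ (x + y) = ψ x + ψ y) ∧ (∀ (c : ℂ) (x), ψ (c • x) = c • ψ x) ∧
        (∀ x y, ψ (x * y) = ψ x * ψ y) ∧ (∀ x, ψ (star x) = star (ψ x)) ∧
        (∀ x ∈ closure {z : Matrix (Fin 2) (Fin 2) A | IsUnit z}, ψ x = φ x)) ↔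
      ((∀ x y : Matrix (Fin 2) (Fin 2) A,
          x ∈ closure {z : Matrix (Fin 2) (Fin 2) A | IsUnit z} →
          y ∈ closure {z : Matrix (Fin 2) (Fin 2) A | IsUnit z} →
          x * y ∈ closure {z : Matrix (Fin 2) (Fin 2) A | IsUnit z} →
          φ (x * y) = φ x * φ y) ∧
        (∀ x : Matrix (Fin 2) (Fin 2) A,
          x ∈ closure {z : Matrix (Fin 2) (Fin 2) A | IsUnit z} →
          star x ∈ closure {z : Matrix (Fin 2) (Fin 2) A | IsUnit z} →
          φ (star x) = star (φ x)) ∧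
        φ (Complex.I • (1 : Matrix (Fin 2) (Fin 2) A)) =
          Complex.I • φ (Matrix.single 0 0 (1 : A)) +
          Complex.I • φ (Matrix.single 1 1 (1 : A))) := by
  constructor
  · rintro ⟨ψ, hadd, hsmul, hmul, hstar, hagree⟩
    have one_eq : (1 : Matrix (Fin 2) (Fin 2) A) = Matrix.single 0 0 1 + Matrix.single 1 1 1 := by
      ext i j
      fin_cases i <;> fin_cases j <;> simp
    refine ⟨fun x y hx hy hxy => ?_, fun x hx hsx => ?_, ?_⟩
    · rw [← hagree _ hxy, ← hagree _ hx, ← hagree _ hy, hmul]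
    · rw [← hagree _ hsx, ← hagree _ hx, hstar]
    · rw [← hagree _ (smul_one_mem_closure_isUnit Complex.I_ne_zero),
        ← hagree _ (Matrix.single_mem_closure_isUnit ℂ _ _ _),
        ← hagree _ (Matrix.single_mem_closure_isUnit ℂ _ _ _), hsmul, one_eq, hadd, smul_add]
  · rintro ⟨hm, hstar, hI⟩
    obtain ⟨ψ, hψ⟩ := ClosureUnitsHom.exists_starAlgHom_eqOn
      (fun x hx y hy => hm x y hx hy (mul_mem_closure_isUnit hx hy)) hstar hI
    exact ⟨ψ, map_add ψ, map_smul ψ, map_mul ψ, map_star ψ, hψ⟩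
end

section
/- Let A and B be C*-algebras with A unital, and let φ : cl(GL(M₂(A))) → B be an arbitrary function defined on the norm closure of the set of invertible elements of M₂(A). Then φ extends to a ℂ-algebra homomorphism M₂(A) → B if and only if φ is a semigroup homomorphism (φ(xy) = φ(x)φ(y) whenever x, y and xy lie in cl(GL(M₂(A)))) which is continuous on ℝ·1 (i.e. λ ↦ φ(λ·1) is continuous on ℝ) and satisfies φ(i·1) = i·φ(e₁₁) + i·φ(e₂₂). -/
/-!
The closure `S` of the invertibles of `M₂(A)` is a multiplicative semigroup containing the
scalars `c • 1` and all `a eᵢⱼ`: off-diagonal ones are nilpotent, hence limits of the invertibles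
`t • 1 + a eᵢⱼ`, and `a eᵢᵢ = a eᵢⱼ * eⱼᵢ`. If `φ` is multiplicative on `S` and
`φ (i • 1) = i • (φ e₁₁ + φ e₂₂)`, then `φ 0 = 0` and `φ 1 = φ e₁₁ + φ e₂₂`, so compressing by the
orthogonal idempotents `φ eᵢᵢ` gives `φ x = ∑ φ (xᵢⱼ eᵢⱼ)` on `S`. Additivity of `a ↦ φ (a e₁₂)`
comes from the unipotents `1 + a e₁₂`, which multiply by adding the corners, and transfers to the
other corners through `a eᵢⱼ = eᵢ₁ (a e₁₂) e₂ⱼ`. Continuity makes `λ ↦ φ (λ • 1)` real-linear,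
multiplicativity and the value at `i • 1` make it complex-linear, and then `x ↦ ∑ φ (xᵢⱼ eᵢⱼ)` is
the required algebra homomorphism.
-/

open Matrix Filter Topology

section ClosureOfUnits

theorem mul_mem_closure_setOf_isUnit {M : Type*} [Monoid M] [TopologicalSpace M] [ContinuousMul M]
    {x y : M} (hx : x ∈ closure {z : M | IsUnit z}) (hy : y ∈ closure {z : M | IsUnit z}) :
    x * y ∈ closure {z : M | IsUnit z} :=
  (IsUnit.submonoid M).topologicalClosure.mul_mem hx hy

variable {R : Type*} [Ring R] [TopologicalSpace R] [ContinuousAdd R]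

theorem IsNilpotent.mem_closure_setOf_isUnit (𝕜 : Type*) [NontriviallyNormedField 𝕜] [Algebra 𝕜 R]
    [ContinuousSMul 𝕜 R] {x : R} (hx : IsNilpotent x) :
    x ∈ closure {z : R | IsUnit z} := by
  have hlim : Tendsto (fun t : 𝕜 => algebraMap 𝕜 R t + x) (𝓝[≠] 0) (𝓝 x) := by
    have hcont : Continuous (fun t : 𝕜 => algebraMap 𝕜 R t + x) := by
      simp only [Algebra.algebraMap_eq_smul_one]
      fun_prop
    simpa using (hcont.tendsto 0).mono_left nhdsWithin_le_nhds
  refine mem_closure_of_tendsto hlim (eventually_nhdsWithin_of_forall fun t ht => ?_)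
  exact hx.isUnit_add_left_of_commute ((isUnit_iff_ne_zero.2 ht).map _) (Algebra.commutes t x).symm

theorem smul_one_mem_closure_setOf_isUnit {𝕜 : Type*} [NontriviallyNormedField 𝕜] [Algebra 𝕜 R]
    [ContinuousSMul 𝕜 R] (c : 𝕜) : c • (1 : R) ∈ closure {z : R | IsUnit z} := by
  rcases eq_or_ne c 0 with rfl | hc
  · rw [zero_smul]
    exact IsNilpotent.zero.mem_closure_setOf_isUnit 𝕜
  · rw [← Algebra.algebraMap_eq_smul_one]
    exact subset_closure ((isUnit_iff_ne_zero.2 hc).map _)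

end ClosureOfUnits

section MatrixUnits

theorem Matrix.isNilpotent_single_of_ne_s7 {n A : Type*} [Fintype n] [DecidableEq n] [Ring A]
    {i j : n} (hij : i ≠ j) (a : A) : IsNilpotent (single i j a) :=
  ⟨2, by rw [sq, single_mul_single_of_ne _ _ _ _ hij.symm]⟩

variable {n A : Type*} [Fintype n] [DecidableEq n] [Ring A] [TopologicalSpace A]
  [IsTopologicalRing A] [Algebra ℂ A] [ContinuousSMul ℂ A]

theorem Matrix.single_mem_closure_setOf_isUnit_of_ne {i j : n} (hij : i ≠ j) (a : A) :
    single i j a ∈ closure {z : Matrix n n A | IsUnit z} :=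
  (isNilpotent_single_of_ne_s7 hij a).mem_closure_setOf_isUnit ℂ

theorem Matrix.single_mem_closure_setOf_isUnit [Nontrivial n] (i j : n) (a : A) :
    single i j a ∈ closure {z : Matrix n n A | IsUnit z} := by
  by_cases hij : i = j
  · obtain ⟨k, hki⟩ := exists_ne i
    rw [← hij, ← mul_one a, ← single_mul_single_same _ i k i]
    exact mul_mem_closure_setOf_isUnit (single_mem_closure_setOf_isUnit_of_ne hki.symm a)
      (single_mem_closure_setOf_isUnit_of_ne hki 1)
  · exact single_mem_closure_setOf_isUnit_of_ne hij a

end MatrixUnits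

def IsMulOn {M N : Type*} [Mul M] [Mul N] (φ : M → N) (S : Set M) : Prop :=
  ∀ x ∈ S, ∀ y ∈ S, φ (x * y) = φ x * φ y

def Matrix.liftSingle {n A B : Type*} [Fintype n] [DecidableEq n] [Zero A] [AddCommMonoid B]
    (φ : Matrix n n A → B) (x : Matrix n n A) : B :=
  ∑ i, ∑ j, φ (single i j (x i j))

namespace IsMulOn

section MulOneClass

variable {M N : Type*} [MulOneClass M] [Mul N] {φ : M → N} {S : Set M}

theorem map_one_mul_map (hφ : IsMulOn φ S) (hS : 1 ∈ S) {x : M} (hx : x ∈ S) :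
    φ 1 * φ x = φ x := by
  rw [← hφ 1 hS x hx, one_mul]

theorem map_mul_map_one (hφ : IsMulOn φ S) (hS : 1 ∈ S) {x : M} (hx : x ∈ S) :
    φ x * φ 1 = φ x := by
  rw [← hφ x hx 1 hS, mul_one]

end MulOneClass

variable {A B : Type*} [Ring A] [TopologicalSpace A] [IsTopologicalRing A] [Algebra ℂ A]
  [ContinuousSMul ℂ A] [NonUnitalRing B] {φ : Matrix (Fin 2) (Fin 2) A → B}

theorem map_single_mul_map_single (hφ : IsMulOn φ (closure {z | IsUnit z})) (i j k l : Fin 2)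
    (a b : A) : φ (single i j a) * φ (single k l b) = φ (single i j a * single k l b) :=
  (hφ _ (single_mem_closure_setOf_isUnit i j a) _ (single_mem_closure_setOf_isUnit k l b)).symm

theorem map_single_mul_map_single_same (hφ : IsMulOn φ (closure {z | IsUnit z})) (i j l : Fin 2)
    (a b : A) : φ (single i j a) * φ (single j l b) = φ (single i l (a * b)) := by
  rw [hφ.map_single_mul_map_single, single_mul_single_same]

theorem map_single_eq_mul (hφ : IsMulOn φ (closure {z | IsUnit z})) (i j : Fin 2) (a : A) :
    φ (single i j a) = φ (single i 0 1) * φ (single 0 1 a) * φ (single 1 j 1) := by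
  rw [hφ.map_single_mul_map_single_same, hφ.map_single_mul_map_single_same, one_mul, mul_one]

variable [Module ℂ B] [IsScalarTower ℂ B B]

theorem map_zero (hφ : IsMulOn φ (closure {z | IsUnit z}))
    (hI : φ (Complex.I • 1) = Complex.I • φ (single 0 0 1) + Complex.I • φ (single 1 1 1)) :
    φ 0 = 0 := by
  have hzero : (0 : Matrix (Fin 2) (Fin 2) A) ∈ closure {z | IsUnit z} := by
    simpa using single_mem_closure_setOf_isUnit (0 : Fin 2) 0 (0 : A)
  have hmul_zero : ∀ x ∈ closure {z | IsUnit z}, φ x * φ 0 = φ 0 := fun x hx => by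
    rw [← hφ x hx 0 hzero, mul_zero]
  have h : φ 0 = (2 * Complex.I) • φ 0 := calc
    φ 0 = φ (Complex.I • 1) * φ 0 := (hmul_zero _ (smul_one_mem_closure_setOf_isUnit _)).symm
    _ = Complex.I • (φ (single 0 0 1) * φ 0) + Complex.I • (φ (single 1 1 1) * φ 0) := by
      rw [hI, add_mul, smul_mul_assoc, smul_mul_assoc]
    _ = (2 * Complex.I) • φ 0 := by
      rw [hmul_zero _ (single_mem_closure_setOf_isUnit 0 0 1),
        hmul_zero _ (single_mem_closure_setOf_isUnit 1 1 1), ← add_smul, two_mul]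
  have h2I : (1 : ℂ) - 2 * Complex.I ≠ 0 := fun h => by simpa using congrArg Complex.re h
  refine (smul_eq_zero.1 ?_).resolve_left h2I
  rw [sub_smul, one_smul, ← h, sub_self]

theorem map_single_mul_map_single_of_ne (hφ : IsMulOn φ (closure {z | IsUnit z}))
    (hI : φ (Complex.I • 1) = Complex.I • φ (single 0 0 1) + Complex.I • φ (single 1 1 1))
    (i : Fin 2) {j k : Fin 2} (l : Fin 2) (hjk : j ≠ k) (a b : A) :
    φ (single i j a) * φ (single k l b) = 0 := by
  rw [hφ.map_single_mul_map_single, single_mul_single_of_ne _ _ _ _ hjk, hφ.map_zero hI]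

variable [SMulCommClass ℂ B B]

theorem map_one (hφ : IsMulOn φ (closure {z | IsUnit z}))
    (hI : φ (Complex.I • 1) = Complex.I • φ (single 0 0 1) + Complex.I • φ (single 1 1 1)) :
    φ 1 = φ (single 0 0 1) + φ (single 1 1 1) := by
  set p := φ (single 0 0 1) + φ (single 1 1 1)
  have hp : p * p = p := by
    simp only [p, add_mul, mul_add, hφ.map_single_mul_map_single_same, one_mul,
      hφ.map_single_mul_map_single_of_ne hI _ _ zero_ne_one,
      hφ.map_single_mul_map_single_of_ne hI _ _ one_ne_zero, add_zero, zero_add]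
  have hmem := smul_one_mem_closure_setOf_isUnit (R := Matrix (Fin 2) (Fin 2) A) (𝕜 := ℂ)
  -- `(i • 1)² = -1` and `(-1)² = 1`, while `φ (i • 1) = i • p` with `p` idempotent.
  have hneg : φ ((-1 : ℂ) • 1) = -p := by
    rw [← Complex.I_mul_I, ← one_mul (1 : Matrix (Fin 2) (Fin 2) A), ← smul_mul_smul_comm,
      hφ _ (hmem _) _ (hmem _), hI, ← smul_add, smul_mul_smul_comm, Complex.I_mul_I, hp,
      neg_one_smul]
  calc φ 1 = φ (((-1 : ℂ) • 1) * ((-1 : ℂ) • 1)) := by rw [smul_mul_smul_comm]; norm_num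
    _ = p := by rw [hφ _ (hmem _) _ (hmem _), hneg, neg_mul_neg, hp]

theorem map_eq_sum (hφ : IsMulOn φ (closure {z | IsUnit z}))
    (hI : φ (Complex.I • 1) = Complex.I • φ (single 0 0 1) + Complex.I • φ (single 1 1 1))
    {x : Matrix (Fin 2) (Fin 2) A} (hx : x ∈ closure {z | IsUnit z}) :
    φ x = ∑ i, ∑ j, φ (single i j (x i j)) := by
  have hone : (1 : Matrix (Fin 2) (Fin 2) A) ∈ closure {z | IsUnit z} := subset_closure isUnit_one
  have hcorner : ∀ i j, φ (single i i 1) * φ x * φ (single j j 1) = φ (single i j (x i j)) := by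
    intro i j
    rw [← hφ _ (single_mem_closure_setOf_isUnit i i 1) _ hx,
      ← hφ _ (mul_mem_closure_setOf_isUnit (single_mem_closure_setOf_isUnit i i 1) hx) _
        (single_mem_closure_setOf_isUnit j j 1), single_mul_mul_single, one_mul, mul_one]
  calc φ x = φ 1 * φ x * φ 1 := by rw [hφ.map_one_mul_map hone hx, hφ.map_mul_map_one hone hx]
    _ = ∑ i, ∑ j, φ (single i i 1) * φ x * φ (single j j 1) := by
      rw [hφ.map_one hI, ← Fin.sum_univ_two (fun i => φ (single i i 1)), Finset.sum_mul,
        Finset.sum_mul]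
      simp only [Finset.mul_sum]
    _ = ∑ i, ∑ j, φ (single i j (x i j)) := by simp only [hcorner]

theorem map_single_zero_one_add (hφ : IsMulOn φ (closure {z | IsUnit z}))
    (hI : φ (Complex.I • 1) = Complex.I • φ (single 0 0 1) + Complex.I • φ (single 1 1 1))
    (a b : A) : φ (single 0 1 (a + b)) = φ (single 0 1 a) + φ (single 0 1 b) := by
  have hone : (1 : Matrix (Fin 2) (Fin 2) A) ∈ closure {z | IsUnit z} := subset_closure isUnit_one
  have hmem : ∀ c : A, 1 + single 0 1 c ∈ closure {z : Matrix (Fin 2) (Fin 2) A | IsUnit z} :=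
    fun c => subset_closure ((isNilpotent_single_of_ne_s7 zero_ne_one c).isUnit_one_add)
  have hdec : ∀ c : A, φ (1 + single 0 1 c) = φ 1 + φ (single 0 1 c) := by
    intro c
    rw [hφ.map_eq_sum hI (hmem c), hφ.map_one hI]
    simp only [Fin.sum_univ_two, Matrix.add_apply, one_apply, single_apply_same,
      single_apply_of_ne, single_zero, hφ.map_zero hI, zero_ne_one, one_ne_zero, ↓reduceIte,
      and_false, and_true, not_false_eq_true, add_zero, zero_add]
    abel
  have hprod : (1 + single 0 1 a) * (1 + single 0 1 b) =
      (1 + single 0 1 (a + b) : Matrix (Fin 2) (Fin 2) A) := by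
    simp only [mul_add, add_mul, one_mul, mul_one, single_add,
      single_mul_single_of_ne _ _ _ _ one_ne_zero, add_zero]
    abel
  have h := hφ _ (hmem a) _ (hmem b)
  rw [hprod, hdec, hdec, hdec, add_mul, mul_add, mul_add, hφ.map_one_mul_map hone hone,
    hφ.map_one_mul_map hone (single_mem_closure_setOf_isUnit 0 1 b),
    hφ.map_mul_map_one hone (single_mem_closure_setOf_isUnit 0 1 a),
    hφ.map_single_mul_map_single_of_ne hI 0 1 one_ne_zero, add_zero] at h
  exact add_left_cancel (h.trans (by abel))

theorem map_single_add (hφ : IsMulOn φ (closure {z | IsUnit z}))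
    (hI : φ (Complex.I • 1) = Complex.I • φ (single 0 0 1) + Complex.I • φ (single 1 1 1))
    (i j : Fin 2) (a b : A) : φ (single i j (a + b)) = φ (single i j a) + φ (single i j b) := by
  simp only [hφ.map_single_eq_mul i j, hφ.map_single_zero_one_add hI, mul_add, add_mul]

theorem map_smul_one_eq_add (hφ : IsMulOn φ (closure {z | IsUnit z}))
    (hI : φ (Complex.I • 1) = Complex.I • φ (single 0 0 1) + Complex.I • φ (single 1 1 1))
    (c : ℂ) : φ (c • 1) = φ (single 0 0 (c • 1)) + φ (single 1 1 (c • 1)) := by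
  rw [hφ.map_eq_sum hI (smul_one_mem_closure_setOf_isUnit c)]
  simp [Fin.sum_univ_two, one_apply, hφ.map_zero hI]

theorem map_add_smul_one (hφ : IsMulOn φ (closure {z | IsUnit z}))
    (hI : φ (Complex.I • 1) = Complex.I • φ (single 0 0 1) + Complex.I • φ (single 1 1 1))
    (c d : ℂ) : φ ((c + d) • 1) = φ (c • 1) + φ (d • 1) := by
  rw [hφ.map_smul_one_eq_add hI (c + d), hφ.map_smul_one_eq_add hI c,
    hφ.map_smul_one_eq_add hI d, add_smul, hφ.map_single_add hI, hφ.map_single_add hI]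
  abel

theorem map_ofReal_smul_one [TopologicalSpace B] [ContinuousSMul ℝ B] [T2Space B]
    (hφ : IsMulOn φ (closure {z | IsUnit z}))
    (hI : φ (Complex.I • 1) = Complex.I • φ (single 0 0 1) + Complex.I • φ (single 1 1 1))
    (hcont : Continuous fun s : ℝ => φ ((s : ℂ) • 1)) (s : ℝ) :
    φ ((s : ℂ) • 1) = (s : ℂ) • φ 1 := by
  let F : ℝ →+ B := AddMonoidHom.mk' (fun s : ℝ => φ ((s : ℂ) • 1))
    fun s t => by rw [Complex.ofReal_add, hφ.map_add_smul_one hI]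
  simpa [F, Complex.coe_smul] using map_real_smul F hcont s 1

theorem map_smul_one [TopologicalSpace B] [ContinuousSMul ℝ B] [T2Space B]
    (hφ : IsMulOn φ (closure {z | IsUnit z}))
    (hI : φ (Complex.I • 1) = Complex.I • φ (single 0 0 1) + Complex.I • φ (single 1 1 1))
    (hcont : Continuous fun s : ℝ => φ ((s : ℂ) • 1)) (c : ℂ) : φ (c • 1) = c • φ 1 := by
  have hmem := smul_one_mem_closure_setOf_isUnit (R := Matrix (Fin 2) (Fin 2) A) (𝕜 := ℂ)
  have hone : (1 : Matrix (Fin 2) (Fin 2) A) ∈ closure {z | IsUnit z} := subset_closure isUnit_one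
  calc φ (c • 1) = φ ((c.re : ℂ) • 1) + φ ((c.im : ℂ) • 1 * Complex.I • 1) := by
        rw [smul_mul_smul_comm, mul_one, ← hφ.map_add_smul_one hI, Complex.re_add_im]
    _ = (c.re : ℂ) • φ 1 + ((c.im : ℂ) • φ 1) * (Complex.I • φ 1) := by
        rw [hφ _ (hmem _) _ (hmem _), hφ.map_ofReal_smul_one hI hcont,
          hφ.map_ofReal_smul_one hI hcont, hI, ← smul_add, ← hφ.map_one hI]
    _ = c • φ 1 := by
        rw [smul_mul_smul_comm, hφ.map_one_mul_map hone hone, ← add_smul, Complex.re_add_im]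

theorem map_single_smul [TopologicalSpace B] [ContinuousSMul ℝ B] [T2Space B]
    (hφ : IsMulOn φ (closure {z | IsUnit z}))
    (hI : φ (Complex.I • 1) = Complex.I • φ (single 0 0 1) + Complex.I • φ (single 1 1 1))
    (hcont : Continuous fun s : ℝ => φ ((s : ℂ) • 1)) (i j : Fin 2) (c : ℂ) (a : A) :
    φ (single i j (c • a)) = c • φ (single i j a) := by
  have hmem := single_mem_closure_setOf_isUnit i j a
  rw [← smul_single, ← smul_one_mul, hφ _ (smul_one_mem_closure_setOf_isUnit c) _ hmem,
    hφ.map_smul_one hI hcont, smul_mul_assoc, hφ.map_one_mul_map (subset_closure isUnit_one) hmem]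

theorem liftSingle_add (hφ : IsMulOn φ (closure {z | IsUnit z}))
    (hI : φ (Complex.I • 1) = Complex.I • φ (single 0 0 1) + Complex.I • φ (single 1 1 1))
    (x y : Matrix (Fin 2) (Fin 2) A) : liftSingle φ (x + y) = liftSingle φ x + liftSingle φ y := by
  simp only [liftSingle, Matrix.add_apply, hφ.map_single_add hI, Finset.sum_add_distrib]

theorem liftSingle_smul [TopologicalSpace B] [ContinuousSMul ℝ B] [T2Space B]
    (hφ : IsMulOn φ (closure {z | IsUnit z}))
    (hI : φ (Complex.I • 1) = Complex.I • φ (single 0 0 1) + Complex.I • φ (single 1 1 1))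
    (hcont : Continuous fun s : ℝ => φ ((s : ℂ) • 1)) (c : ℂ) (x : Matrix (Fin 2) (Fin 2) A) :
    liftSingle φ (c • x) = c • liftSingle φ x := by
  simp only [liftSingle, Matrix.smul_apply, hφ.map_single_smul hI hcont, Finset.smul_sum]

theorem liftSingle_mul (hφ : IsMulOn φ (closure {z | IsUnit z}))
    (hI : φ (Complex.I • 1) = Complex.I • φ (single 0 0 1) + Complex.I • φ (single 1 1 1))
    (x y : Matrix (Fin 2) (Fin 2) A) : liftSingle φ (x * y) = liftSingle φ x * liftSingle φ y := by
  simp only [liftSingle, mul_apply, Fin.sum_univ_two, hφ.map_single_add hI, add_mul, mul_add,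
    hφ.map_single_mul_map_single_same, hφ.map_single_mul_map_single_of_ne hI _ _ zero_ne_one,
    hφ.map_single_mul_map_single_of_ne hI _ _ one_ne_zero, add_zero, zero_add]
  abel

end IsMulOn

/-- Let `A` and `B` be C*-algebras with `A` unital, and let
`φ` be an arbitrary function on the norm closure of the invertibles of
`M₂(A)` (modelled as a total function whose relevant values are those on the
closure).  Then `φ` extends to a `ℂ`-algebra homomorphism `M₂(A) → B` if and
only if `φ` is a semigroup homomorphism on the closure which is continuous
on `ℝ·1` and satisfies `φ(i·1) = i·φ(e₁₁) + i·φ(e₂₂)`. -/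
theorem stmt_7 {A B : Type*} [CStarAlgebra A] [NonUnitalCStarAlgebra B]
    (φ : Matrix (Fin 2) (Fin 2) A → B) :
    (∃ ψ : Matrix (Fin 2) (Fin 2) A → B,
        (∀ x y, ψ (x + y) = ψ x + ψ y) ∧ (∀ (c : ℂ) (x), ψ (c • x) = c • ψ x) ∧
        (∀ x y, ψ (x * y) = ψ x * ψ y) ∧
        (∀ x ∈ closure {z : Matrix (Fin 2) (Fin 2) A | IsUnit z}, ψ x = φ x)) ↔
      ((∀ x y : Matrix (Fin 2) (Fin 2) A,
          x ∈ closure {z : Matrix (Fin 2) (Fin 2) A | IsUnit z} →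
          y ∈ closure {z : Matrix (Fin 2) (Fin 2) A | IsUnit z} →
          x * y ∈ closure {z : Matrix (Fin 2) (Fin 2) A | IsUnit z} →
          φ (x * y) = φ x * φ y) ∧
        Continuous (fun lam : ℝ =>
          φ ((lam : ℂ) • (1 : Matrix (Fin 2) (Fin 2) A))) ∧
        φ (Complex.I • (1 : Matrix (Fin 2) (Fin 2) A)) =
          Complex.I • φ (Matrix.single 0 0 (1 : A)) +
          Complex.I • φ (Matrix.single 1 1 (1 : A))) := by
  constructor
  · rintro ⟨ψ, hadd, hsmul, hmul, hψφ⟩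
    have hscalar : ∀ c : ℂ, φ (c • 1) = c • ψ 1 := fun c => by
      rw [← hψφ _ (smul_one_mem_closure_setOf_isUnit c), hsmul]
    refine ⟨fun x y hx hy hxy => by rw [← hψφ x hx, ← hψφ y hy, ← hψφ _ hxy, hmul], ?_, ?_⟩
    · simp only [hscalar]
      fun_prop
    · rw [hscalar, ← hψφ _ (single_mem_closure_setOf_isUnit 0 0 1),
        ← hψφ _ (single_mem_closure_setOf_isUnit 1 1 1), ← smul_add, ← hadd, ← Fin.sum_univ_two
          (fun i => single i i (1 : A)), sum_single_one]
  · rintro ⟨hmul, hcont, hI⟩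
    have hφ : IsMulOn φ (closure {z | IsUnit z}) := fun x hx y hy =>
      hmul x y hx hy (mul_mem_closure_setOf_isUnit hx hy)
    exact ⟨liftSingle φ, hφ.liftSingle_add hI, hφ.liftSingle_smul hI hcont,
      hφ.liftSingle_mul hI, fun x hx => (hφ.map_eq_sum hI hx).symm⟩
end

section
/- Let A and B be unital C*-algebras and φ : A → B an arbitrary function. Then φ is a unital ring homomorphism if and only if the entrywise map φ ⊗ id_{M₁₆} : M₁₆(A) → M₁₆(B) restricts to a group homomorphism from GL(M₁₆(A)) to GL(M₁₆(B)) (i.e. it maps invertible matrices to invertible matrices, sends the identity to the identity, and (φ ⊗ id_{M₁₆})(uv) = (φ ⊗ id_{M₁₆})(u) · (φ ⊗ id_{M₁₆})(v) for all invertible u, v ∈ M₁₆(A)). -/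
/-!
A unital ring homomorphism `φ` induces the unital ring homomorphism `φ.mapMatrix`, which
preserves invertibility and products. Conversely, `φ` can be read off from the invertible
elementary matrices `1 + single i j a`: for distinct indices `i, j, k`, the product
`(1 + single i j a) * (1 + single i j b)` has `(i, j)` entry `a + b` and
`(1 + single i j a) * (1 + single j k b)` has `(i, k)` entry `a * b`, so multiplicativity of
`φ ⊗ id` on these matrices forces additivity and multiplicativity of `φ`.
-/

namespace Matrix

variable {n A B : Type*} [DecidableEq n] [Ring A] [Ring B] {i j k : n}

lemma map_one_add_single {φ : A → B} (h0 : φ 0 = 0) (h1 : φ 1 = 1) (hij : i ≠ j) (a : A) :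
    (1 + single i j a).map φ = 1 + single i j (φ a) := by
  ext p q
  simp only [map_apply, add_apply, one_apply, single_apply]
  split_ifs <;> simp_all

variable [Fintype n]

lemma single_mul_single_self (hij : i ≠ j) (a b : A) : single i j a * single i j b = 0 :=
  single_mul_single_of_ne (c := a) i j i hij.symm b

lemma isUnit_one_add_single (hij : i ≠ j) (a : A) : IsUnit (1 + single i j a) := by
  refine ⟨⟨_, 1 - single i j a, ?_, ?_⟩, rfl⟩ <;>
    noncomm_ring <;> simp [single_mul_single_self hij]

lemma one_add_single_mul_one_add_single_apply_same (hij : i ≠ j) (a b : A) :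
    ((1 + single i j a) * (1 + single i j b)) i j = a + b := by
  simp [add_mul, mul_add, single_mul_single_self hij, one_apply_ne hij]

lemma one_add_single_mul_one_add_single_apply (hij : i ≠ j) (hjk : j ≠ k) (hik : i ≠ k)
    (a b : A) : ((1 + single i j a) * (1 + single j k b)) i k = a * b := by
  simp [add_mul, mul_add, one_apply_ne hik, hij.symm, hjk]

theorem ringHom_of_map_mul_of_isUnit {φ : A → B} (hij : i ≠ j) (hjk : j ≠ k) (hik : i ≠ k)
    (hone : (1 : Matrix n n A).map φ = 1)
    (hmul : ∀ u v : Matrix n n A, IsUnit u → IsUnit v → (u * v).map φ = u.map φ * v.map φ) :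
    φ 1 = 1 ∧ (∀ x y, φ (x + y) = φ x + φ y) ∧ (∀ x y, φ (x * y) = φ x * φ y) := by
  have h0 : φ 0 = 0 := by simpa [one_apply_ne hij] using congr_fun₂ hone i j
  have h1 : φ 1 = 1 := by simpa using congr_fun₂ hone i i
  have hmul_single : ∀ {p q r s : n}, p ≠ q → r ≠ s → ∀ a b : A,
      ((1 + single p q a) * (1 + single r s b)).map φ =
        (1 + single p q (φ a)) * (1 + single r s (φ b)) := fun hpq hrs a b => by
    rw [hmul _ _ (isUnit_one_add_single hpq a) (isUnit_one_add_single hrs b),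
      map_one_add_single h0 h1 hpq, map_one_add_single h0 h1 hrs]
  refine ⟨h1, fun x y => ?_, fun x y => ?_⟩
  · simpa [one_add_single_mul_one_add_single_apply_same hij] using
      congr_fun₂ (hmul_single hij hij x y) i j
  · simpa [one_add_single_mul_one_add_single_apply hij hjk hik] using
      congr_fun₂ (hmul_single hij hjk x y) i k

end Matrix

/-- Let `A` and `B` be unital C*-algebras and `φ : A → B` an
arbitrary function.  Then `φ` is a unital ring homomorphism if and only if
the entrywise map `φ ⊗ id_{M₁₆}` restricts to a group homomorphism
`GL(M₁₆(A)) → GL(M₁₆(B))` (it maps invertibles to invertibles, sends the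
identity to the identity, and is multiplicative on invertibles). -/
theorem stmt_9 {A B : Type*} [CStarAlgebra A] [CStarAlgebra B] (φ : A → B) :
    (φ 1 = 1 ∧ (∀ x y, φ (x + y) = φ x + φ y) ∧
        (∀ x y, φ (x * y) = φ x * φ y)) ↔
      ((∀ u : Matrix (Fin 16) (Fin 16) A, IsUnit u → IsUnit (u.map φ)) ∧
        (1 : Matrix (Fin 16) (Fin 16) A).map φ = 1 ∧
        (∀ u v : Matrix (Fin 16) (Fin 16) A, IsUnit u → IsUnit v →
          (u * v).map φ = u.map φ * v.map φ)) := by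
  constructor
  · rintro ⟨h1, hadd, hmul⟩
    let f : A →+* B := RingHom.mk' ⟨⟨φ, h1⟩, hmul⟩ hadd
    exact ⟨fun u hu => hu.map f.mapMatrix, map_one f.mapMatrix,
      fun u v _ _ => map_mul f.mapMatrix u v⟩
  · rintro ⟨-, hone, hmul⟩
    exact Matrix.ringHom_of_map_mul_of_isUnit (i := 0) (j := 1) (k := 2) (by decide)
      (by decide) (by decide) hone hmul
end

section
/- Let A and B be unital C*-algebras and φ : A → B a ℂ-homogeneous function (φ(λx) = λφ(x) for all x ∈ A, λ ∈ ℂ) such that the entrywise map φ ⊗ id_{M₂} : M₂(A) → M₂(B) maps unitaries of M₂(A) to unitaries of M₂(B) and satisfies (φ ⊗ id_{M₂})(uv) = (φ ⊗ id_{M₂})(u) · (φ ⊗ id_{M₂})(v) for all unitaries u, v ∈ M₂(A). Then φ(a + b) = φ(a) + φ(b) for all a, b ∈ A that are scalar multiples of unitaries of A. -/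
/-!
Multiplicativity on the unitary `1 ∈ M₂(A)` forces `φ 1 = 1`, so by homogeneity
`φ ⊗ id` fixes every scalar matrix. For scalar unitaries `M, N` and `u, v` unitary,
`(M · diag(u, v) · N)₀₀ = M₀₀N₀₀ u + M₀₁N₁₀ v`, and multiplicativity of `φ ⊗ id`
on this product shows that `φ` preserves such combinations. Taking the first row of `M`
proportional to `(λ, μ)` and the first column of `N` proportional to `(1, 1)` yields
`φ(c (λu + μv)) = c (λφ(u) + μφ(v))` for some `c ≠ 0`.
-/

namespace Matrix

variable {n : Type*} [Fintype n] [DecidableEq n]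

theorem map_mem_unitary {R S F : Type*} [Semiring R] [StarRing R] [Semiring S] [StarRing S]
    [FunLike F R S] [RingHomClass F R S] [StarHomClass F R S] (f : F) {U : Matrix n n R}
    (hU : U ∈ unitary (Matrix n n R)) : U.map f ∈ unitary (Matrix n n S) := by
  have hstar : star (U.map f) = (star U).map f := by
    simp only [star_eq_conjTranspose, conjTranspose_map f (map_star f)]
  rw [Unitary.mem_iff, hstar, ← Matrix.map_mul, ← Matrix.map_mul, hU.1, hU.2,
    Matrix.map_one _ (map_zero f) (map_one f)]
  exact ⟨rfl, rfl⟩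

theorem diagonal_mem_unitary {R : Type*} [Semiring R] [StarRing R] {d : n → R}
    (hd : ∀ i, d i ∈ unitary R) : diagonal d ∈ unitary (Matrix n n R) := by
  rw [Unitary.mem_iff, star_eq_conjTranspose, diagonal_conjTranspose, diagonal_mul_diagonal,
    diagonal_mul_diagonal, ← diagonal_one]
  exact ⟨congrArg diagonal (funext fun i => (hd i).1),
    congrArg diagonal (funext fun i => (hd i).2)⟩

theorem map_algebraMap_mul_diagonal_mul_apply {R A : Type*} [CommSemiring R] [Semiring A]
    [Algebra R A] (M N : Matrix n n R) (d : n → A) (i j : n) :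
    (M.map (algebraMap R A) * diagonal d * N.map (algebraMap R A)) i j
      = ∑ k, (M i k * N k j) • d k := by
  simp only [mul_apply (M := _ * diagonal d), mul_diagonal, map_apply]
  refine Finset.sum_congr rfl fun k _ => ?_
  rw [Algebra.smul_def, map_mul, mul_assoc, mul_assoc, Algebra.commutes (N k j)]

def cayleyKlein {R : Type*} [Ring R] [Star R] (α β : R) : Matrix (Fin 2) (Fin 2) R :=
  !![α, β; -star β, star α]

theorem cayleyKlein_mem_unitary {R : Type*} [CommRing R] [StarRing R] {α β : R}
    (h : star α * α + star β * β = 1) :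
    cayleyKlein α β ∈ unitary (Matrix (Fin 2) (Fin 2) R) := by
  rw [Unitary.mem_iff, star_eq_conjTranspose, cayleyKlein]
  constructor <;> ext i j <;> fin_cases i <;> fin_cases j <;>
    simp [mul_apply, Fin.sum_univ_two] <;> first | linear_combination h | ring

end Matrix

theorem Complex.exists_ne_zero_star_mul_add_eq_one {z w : ℂ} (h : z ≠ 0 ∨ w ≠ 0) :
    ∃ c : ℂ, c ≠ 0 ∧ star (c * z) * (c * z) + star (c * w) * (c * w) = 1 := by
  have hpos : 0 < normSq z + normSq w := by
    rcases h with h | h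
    · exact add_pos_of_pos_of_nonneg (normSq_pos.2 h) (normSq_nonneg w)
    · exact add_pos_of_nonneg_of_pos (normSq_nonneg z) (normSq_pos.2 h)
  have hν : (√(normSq z + normSq w) : ℂ) ^ 2 = normSq z + normSq w := by
    exact_mod_cast Real.sq_sqrt hpos.le
  have hν0 : (√(normSq z + normSq w) : ℂ) ≠ 0 := by exact_mod_cast (Real.sqrt_pos.2 hpos).ne'
  refine ⟨(√(normSq z + normSq w) : ℂ)⁻¹, inv_ne_zero hν0, ?_⟩
  simp only [star_mul', star_inv₀, star_def, conj_ofReal]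
  field_simp
  rw [hν, normSq_eq_conj_mul_self, normSq_eq_conj_mul_self]

section MatrixMapUnitary

open Matrix

variable {𝕜 A B : Type*} [CommRing 𝕜] [StarRing 𝕜]
  [Ring A] [StarRing A] [Algebra 𝕜 A] [StarModule 𝕜 A]
  [Ring B] [StarRing B] [Algebra 𝕜 B]
  {n : Type*} [Fintype n] [DecidableEq n] {φ : A → B}

theorem map_one_of_matrix_map_unitary [Nonempty n]
    (hmap : ∀ u : Matrix n n A, u ∈ unitary (Matrix n n A) → u.map φ ∈ unitary (Matrix n n B))
    (hmul : ∀ u v : Matrix n n A, u ∈ unitary (Matrix n n A) → v ∈ unitary (Matrix n n A) →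
      (u * v).map φ = u.map φ * v.map φ) :
    φ 1 = 1 := by
  have hone : (1 : Matrix n n A).map φ = 1 :=
    (Unitary.isUnit_coe (U := ⟨_, hmap 1 (one_mem _)⟩)).mul_eq_left.1
      (by rw [← hmul 1 1 (one_mem _) (one_mem _), one_mul])
  obtain ⟨i⟩ := ‹Nonempty n›
  simpa using congrFun₂ hone i i

theorem map_sum_smul_of_matrix_map_unitary [Nonempty n]
    (hhom : ∀ (c : 𝕜) (x : A), φ (c • x) = c • φ x)
    (hmap : ∀ u : Matrix n n A, u ∈ unitary (Matrix n n A) → u.map φ ∈ unitary (Matrix n n B))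
    (hmul : ∀ u v : Matrix n n A, u ∈ unitary (Matrix n n A) → v ∈ unitary (Matrix n n A) →
      (u * v).map φ = u.map φ * v.map φ)
    {M N : Matrix n n 𝕜} (hM : M ∈ unitary (Matrix n n 𝕜)) (hN : N ∈ unitary (Matrix n n 𝕜))
    {d : n → A} (hd : ∀ k, d k ∈ unitary A) (i j : n) :
    φ (∑ k, (M i k * N k j) • d k) = ∑ k, (M i k * N k j) • φ (d k) := by
  have h0 : φ 0 = 0 := by simpa using hhom 0 0
  have h1 := map_one_of_matrix_map_unitary hmap hmul
  have hscalar (P : Matrix n n 𝕜) :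
      (P.map (algebraMap 𝕜 A)).map φ = P.map (algebraMap 𝕜 B) := by
    ext k l
    simp only [map_apply, Algebra.algebraMap_eq_smul_one, hhom, h1]
  have hM' : M.map (algebraMap 𝕜 A) ∈ unitary _ := map_mem_unitary (StarAlgHom.ofId 𝕜 A) hM
  have hN' : N.map (algebraMap 𝕜 A) ∈ unitary _ := map_mem_unitary (StarAlgHom.ofId 𝕜 A) hN
  have hD := diagonal_mem_unitary hd
  have key := congrFun₂ ((hmul _ _ (mul_mem hM' hD) hN').trans (by rw [hmul _ _ hM' hD])) i j
  rwa [map_apply, map_algebraMap_mul_diagonal_mul_apply, hscalar, hscalar, diagonal_map h0,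
    map_algebraMap_mul_diagonal_mul_apply] at key

end MatrixMapUnitary

open Matrix in
theorem map_smul_add_smul_of_matrix_map_unitary {A B : Type*} [Ring A] [StarRing A]
    [Algebra ℂ A] [StarModule ℂ A] [Ring B] [StarRing B] [Algebra ℂ B] {φ : A → B}
    (hhom : ∀ (c : ℂ) (x : A), φ (c • x) = c • φ x)
    (hmap : ∀ u : Matrix (Fin 2) (Fin 2) A,
      u ∈ unitary (Matrix (Fin 2) (Fin 2) A) → u.map φ ∈ unitary (Matrix (Fin 2) (Fin 2) B))
    (hmul : ∀ u v : Matrix (Fin 2) (Fin 2) A, u ∈ unitary (Matrix (Fin 2) (Fin 2) A) →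
      v ∈ unitary (Matrix (Fin 2) (Fin 2) A) → (u * v).map φ = u.map φ * v.map φ)
    {u v : A} (hu : u ∈ unitary A) (hv : v ∈ unitary A) (lam mu : ℂ) :
    φ (lam • u + mu • v) = lam • φ u + mu • φ v := by
  by_cases h : lam = 0 ∧ mu = 0
  · simpa [h.1, h.2] using hhom 0 0
  obtain ⟨c, hc, hM⟩ := Complex.exists_ne_zero_star_mul_add_eq_one (not_and_or.1 h)
  obtain ⟨c', hc', hN⟩ := Complex.exists_ne_zero_star_mul_add_eq_one (z := 1) (w := 1) (by simp)
  have key := map_sum_smul_of_matrix_map_unitary hhom hmap hmul (cayleyKlein_mem_unitary hM)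
    (transpose_mem_unitaryGroup_iff.2 (cayleyKlein_mem_unitary hN)) (d := ![u, v])
    (by simp [Fin.forall_fin_two, hu, hv]) 0 0
  simp only [cayleyKlein, star_mul', RCLike.star_def, of_apply, cons_val', cons_val_fin_one,
    cons_val_zero, mul_one, transpose_apply, Fin.sum_univ_two, cons_val_one] at key
  have hsum : (c * c') • (lam • u + mu • v) = (c * lam * c') • u + (c * mu * c') • v := by
    module
  rw [← hsum, hhom] at key
  refine smul_right_injective B (mul_ne_zero hc hc') ?_
  simp only [key]
  module

/-- Let `A` and `B` be unital C*-algebras and `φ : A → B`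
a `ℂ`-homogeneous function such that `φ ⊗ id_{M₂}` maps unitaries of `M₂(A)`
to unitaries of `M₂(B)` and is multiplicative on unitaries.  Then
`φ(a + b) = φ(a) + φ(b)` for all scalar multiples `a, b` of unitaries of
`A`. -/
theorem stmt_14 {A B : Type*} [CStarAlgebra A] [CStarAlgebra B] (φ : A → B)
    (hhom : ∀ (c : ℂ) (x : A), φ (c • x) = c • φ x)
    (hmap : ∀ u : Matrix (Fin 2) (Fin 2) A,
      u ∈ unitary (Matrix (Fin 2) (Fin 2) A) →
      u.map φ ∈ unitary (Matrix (Fin 2) (Fin 2) B))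
    (hmul : ∀ u v : Matrix (Fin 2) (Fin 2) A,
      u ∈ unitary (Matrix (Fin 2) (Fin 2) A) →
      v ∈ unitary (Matrix (Fin 2) (Fin 2) A) →
      (u * v).map φ = u.map φ * v.map φ) :
    ∀ a b : A,
      (∃ (lam : ℂ) (u : A), u ∈ unitary A ∧ a = lam • u) →
      (∃ (mu : ℂ) (v : A), v ∈ unitary A ∧ b = mu • v) →
      φ (a + b) = φ a + φ b := by
  rintro a b ⟨lam, u, hu, rfl⟩ ⟨mu, v, hv, rfl⟩
  rw [map_smul_add_smul_of_matrix_map_unitary hhom hmap hmul hu hv, hhom, hhom]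
end
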